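/- arXiv:1506.07820 — 13 statements merged into one kernel-verified Lean document; each statement's English description precedes it below -/
import Mathlib

section
/- Every internal, commutative, non-decreasing binary function O : [0,1]² → [0,1] is associative. -/
open Set

/-- The unit interval as a subset of ℝ. -/
def UnitI : Set ℝ := Set.Icc 0 1

/-- Commutativity on the unit square. -/
def Comm2 (U : ℝ → ℝ → ℝ) : Prop := ∀ x ∈ UnitI, ∀ y ∈ UnitI, U x y = U y x

/-- Associativity on the unit cube. -/
def Assoc2 (U : ℝ → ℝ → ℝ) : Prop :=
  ∀ x ∈ UnitI, ∀ y ∈ UnitI, ∀ z ∈ UnitI, U (U x y) z = U x (U y z)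

/-- Monotonicity (non-decreasing) in each variable on the unit square. -/
def Mono2 (U : ℝ → ℝ → ℝ) : Prop :=
  ∀ x₁ ∈ UnitI, ∀ x₂ ∈ UnitI, ∀ y ∈ UnitI, x₁ ≤ x₂ → U x₁ y ≤ U x₂ y ∧ U y x₁ ≤ U y x₂

/-- The unit square is closed under U. -/
def MapsI (U : ℝ → ℝ → ℝ) : Prop := ∀ x ∈ UnitI, ∀ y ∈ UnitI, U x y ∈ UnitI

/-- A uninorm with neutral element e. -/
def Uninorm (U : ℝ → ℝ → ℝ) (e : ℝ) : Prop :=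
  e ∈ UnitI ∧ MapsI U ∧ Comm2 U ∧ Assoc2 U ∧ Mono2 U ∧ (∀ x ∈ UnitI, U e x = x ∧ U x e = x)

/-- If `e` is absorbing for each of `a`, `b`, `c` and equals one of them, then
associativity holds for the triple `(a, b, c)`. -/
lemma aux_assoc (O : ℝ → ℝ → ℝ) {a b c e : ℝ}
    (hab : O a b = a ∨ O a b = b) (_hbc : O b c = b ∨ O b c = c)
    (hea : O e a = e) (hae : O a e = e) (heb : O e b = e) (hbe : O b e = e)
    (hec : O e c = e) (_hce : O c e = e)
    (h : e = a ∨ e = b ∨ e = c) : O (O a b) c = O a (O b c) := by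
  rcases h with h | h | h
  · subst h
    rw [heb, hec]
    rcases _hbc with h' | h' <;> rw [h']
    · exact heb.symm
    · exact hec.symm
  · subst h
    rw [hae, hec, hae]
  · subst h
    rw [hbe, hae]
    rcases hab with h' | h' <;> rw [h']
    · exact hae
    · exact hbe

/-- Every internal, commutative, non-decreasing binary function on the unit
square is associative. -/
theorem internal_comm_mono_assoc (O : ℝ → ℝ → ℝ)
    (hint : ∀ x ∈ UnitI, ∀ y ∈ UnitI, O x y = x ∨ O x y = y)
    (hcomm : Comm2 O) (hmono : Mono2 O) :
    Assoc2 O := by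
  intro a ha b hb c hc
  set m := min a (min b c) with hm_def
  set M := max a (max b c) with hM_def
  have hmem_m : m ∈ UnitI :=
    ⟨le_min ha.1 (le_min hb.1 hc.1), (min_le_left _ _).trans ha.2⟩
  have hmem_M : M ∈ UnitI :=
    ⟨ha.1.trans (le_max_left _ _), max_le ha.2 (max_le hb.2 hc.2)⟩
  have hma : m ≤ a := min_le_left _ _
  have hmb : m ≤ b := (min_le_right _ _).trans (min_le_left _ _)
  have hmc : m ≤ c := (min_le_right _ _).trans (min_le_right _ _)
  have haM : a ≤ M := le_max_left _ _
  have hbM : b ≤ M := (le_max_left _ _).trans (le_max_right _ _)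
  have hcM : c ≤ M := (le_max_right _ _).trans (le_max_right _ _)
  have hm3 : m = a ∨ m = b ∨ m = c := by
    rcases min_cases a (min b c) with ⟨h1, _⟩ | ⟨h1, _⟩
    · exact Or.inl h1
    · rcases min_cases b c with ⟨h2, _⟩ | ⟨h2, _⟩
      · exact Or.inr (Or.inl (h1.trans h2))
      · exact Or.inr (Or.inr (h1.trans h2))
  have hM3 : M = a ∨ M = b ∨ M = c := by
    rcases max_cases a (max b c) with ⟨h1, _⟩ | ⟨h1, _⟩
    · exact Or.inl h1
    · rcases max_cases b c with ⟨h2, _⟩ | ⟨h2, _⟩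
      · exact Or.inr (Or.inl (h1.trans h2))
      · exact Or.inr (Or.inr (h1.trans h2))
  rcases hint m hmem_m M hmem_M with hmM | hmM
  · -- m is absorbing on [m, M]
    have key : ∀ w ∈ UnitI, m ≤ w → w ≤ M → O m w = m ∧ O w m = m := by
      intro w hw hmw hwM
      have h1 : O m w ≤ O m M := (hmono w hw M hmem_M m hmem_m hwM).2
      rw [hmM] at h1
      rcases hint m hmem_m w hw with h2 | h2
      · exact ⟨h2, (hcomm w hw m hmem_m).trans h2⟩
      · have hwm : w = m := le_antisymm (h2 ▸ h1) hmw
        rw [hwm] at h2 ⊢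
        exact ⟨h2, h2⟩
    obtain ⟨h1a, h2a⟩ := key a ha hma haM
    obtain ⟨h1b, h2b⟩ := key b hb hmb hbM
    obtain ⟨h1c, h2c⟩ := key c hc hmc hcM
    exact aux_assoc O (hint a ha b hb) (hint b hb c hc) h1a h2a h1b h2b h1c h2c hm3
  · -- M is absorbing on [m, M]
    have key : ∀ w ∈ UnitI, m ≤ w → w ≤ M → O M w = M ∧ O w M = M := by
      intro w hw hmw hwM
      have h1 : O m M ≤ O w M := (hmono m hmem_m w hw M hmem_M hmw).1
      rw [hmM] at h1
      rcases hint w hw M hmem_M with h2 | h2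
      · have hwM' : w = M := le_antisymm hwM (h2 ▸ h1)
        rw [hwM'] at h2 ⊢
        exact ⟨h2, h2⟩
      · exact ⟨(hcomm M hmem_M w hw).trans h2, h2⟩
    obtain ⟨h1a, h2a⟩ := key a ha hma haM
    obtain ⟨h1b, h2b⟩ := key b hb hmb hbM
    obtain ⟨h1c, h2c⟩ := key c hc hmc hcM
    exact aux_assoc O (hint a ha b hb) (hint b hb c hc) h1a h2a h1b h2b h1c h2c hM3
end

section
/- Let O : [0,1]² → [0,1] be commutative and non-decreasing in both variables. If x,y,z ∈ [0,1] satisfy O(x,y) ∈ {x,y}, O(x,z) ∈ {x,z}, and O(y,z) ∈ {y,z}, then O(O(x,y),z) = O(O(y,z),x) = O(O(x,z),y). -/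
open Set

lemma key_cycle (O : ℝ → ℝ → ℝ) (hcomm : Comm2 O) (hmono : Mono2 O)
    (a b c : ℝ) (ha : a ∈ UnitI) (hb : b ∈ UnitI) (hc : c ∈ UnitI)
    (h1 : O a b = a) (h2 : O a c = c) (h3 : O b c = b) : a = b ∧ b = c := by
  rcases le_total a b with hab | hba
  · have h4 : c ≤ b := by
      have := (hmono a ha b hb c hc hab).1
      rwa [h2, h3] at this
    have h5 : c ≤ a := by
      have := (hmono c hc b hb a ha h4).2
      rwa [h2, h1] at this
    have h6 : b ≤ a := by
      have := (hmono c hc a ha b hb h5).1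
      rwa [hcomm c hc b hb, h3, h1] at this
    have hab' : a = b := le_antisymm hab h6
    refine ⟨hab', ?_⟩
    rw [← h3, ← hab', h2]
  · have h4 : b ≤ c := by
      have := (hmono b hb a ha c hc hba).1
      rwa [h3, h2] at this
    have h5 : a ≤ c := by
      have := (hmono b hb c hc a ha h4).2
      rwa [h1, h2] at this
    have h6 : a ≤ b := by
      have := (hmono a ha c hc b hb h5).1
      rwa [h1, hcomm c hc b hb, h3] at this
    have hab' : a = b := le_antisymm h6 hba
    refine ⟨hab', ?_⟩
    rw [← h3, ← hab', h2]

/-- If O is commutative and non-decreasing and is internal on the pairs formed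
from x, y, z, then the three ways of combining x, y, z coincide. -/
theorem internal_triple_assoc (O : ℝ → ℝ → ℝ)
    (hcomm : Comm2 O) (hmono : Mono2 O)
    (x y z : ℝ) (hx : x ∈ UnitI) (hy : y ∈ UnitI) (hz : z ∈ UnitI)
    (hxy : O x y = x ∨ O x y = y) (hxz : O x z = x ∨ O x z = z)
    (hyz : O y z = y ∨ O y z = z) :
    O (O x y) z = O (O y z) x ∧ O (O y z) x = O (O x z) y := by
  rcases hxy with h1 | h1 <;> rcases hxz with h2 | h2 <;> rcases hyz with h3 | h3 <;>
    try (simp only [h1, h2, h3, hcomm y hy x hx, hcomm z hz x hx, hcomm z hz y hy,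
      h1, h2, h3]; trivial)
  · -- bad case: O x y = x, O x z = z, O y z = y
    obtain ⟨e1, e2⟩ := key_cycle O hcomm hmono x y z hx hy hz h1 h2 h3
    subst e1; subst e2
    exact ⟨rfl, rfl⟩
  · -- bad case: O x y = y, O x z = x, O y z = z
    have h1' : O y x = y := by rw [hcomm y hy x hx]; exact h1
    obtain ⟨e1, e2⟩ := key_cycle O hcomm hmono y x z hy hx hz h1' h3 h2
    subst e1; subst e2
    exact ⟨rfl, rfl⟩
end

section
/- Let U : [0,1]² → [0,1] be a uninorm with neutral element e such that its underlying t-norm on [0,e]² is the minimum and its underlying t-conorm on [e,1]² is the maximum. Then U is internal, i.e., U(x,y) ∈ {x,y} for all x,y ∈ [0,1]. -/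
open Set

/-- A uninorm whose underlying t-norm is the minimum and whose underlying
t-conorm is the maximum is internal. -/
theorem uninorm_min_max_internal (U : ℝ → ℝ → ℝ) (e : ℝ) (hU : Uninorm U e)
    (hT : ∀ x ∈ Set.Icc (0:ℝ) e, ∀ y ∈ Set.Icc (0:ℝ) e, U x y = min x y)
    (hC : ∀ x ∈ Set.Icc e (1:ℝ), ∀ y ∈ Set.Icc e (1:ℝ), U x y = max x y) :
    ∀ x ∈ UnitI, ∀ y ∈ UnitI, U x y = x ∨ U x y = y := by
  obtain ⟨he, hM, hc, ha, hm, hn⟩ := hU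
  -- mixed case helper
  have mixed : ∀ x ∈ UnitI, ∀ y ∈ UnitI, x ≤ e → e ≤ y → U x y = x ∨ U x y = y := by
    intro x hx y hy hxe hey
    have hz : U x y ∈ UnitI := hM x hx y hy
    have hxx : U x x = x := by
      rw [hT x ⟨hx.1, hxe⟩ x ⟨hx.1, hxe⟩]; exact min_self x
    have hyy : U y y = y := by
      rw [hC y ⟨hey, hy.2⟩ y ⟨hey, hy.2⟩]; exact max_self y
    have hxz : U x (U x y) = U x y := by
      rw [← ha x hx x hx y hy, hxx]
    have hyz : U y (U x y) = U x y := by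
      rw [hc x hx y hy, ← ha y hy y hy x hx, hyy]
    -- x ≤ U x y ≤ y
    have hxle : x ≤ U x y := by
      have := (hm e he y hy x hx hey).2
      rwa [(hn x hx).2] at this
    have hley : U x y ≤ y := by
      have := (hm x hx e he y hy hxe).1
      rwa [(hn y hy).1] at this
    rcases le_total (U x y) e with h | h
    · left
      have := hT x ⟨hx.1, hxe⟩ (U x y) ⟨hz.1, h⟩
      rw [hxz, min_eq_left hxle] at this
      exact this
    · right
      have := hC y ⟨hey, hy.2⟩ (U x y) ⟨h, hz.2⟩
      rw [hyz, max_eq_left hley] at this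
      exact this
  intro x hx y hy
  rcases le_total x e with hxe | hex
  · rcases le_total y e with hye | hey
    · rcases le_total x y with h | h
      · left; rw [hT x ⟨hx.1, hxe⟩ y ⟨hy.1, hye⟩]; exact min_eq_left h
      · right; rw [hT x ⟨hx.1, hxe⟩ y ⟨hy.1, hye⟩]; exact min_eq_right h
    · exact mixed x hx y hy hxe hey
  · rcases le_total y e with hye | hey
    · rw [hc x hx y hy]
      rcases mixed y hy x hx hye hex with h | h
      · right; exact h
      · left; exact h
    · rcases le_total x y with h | h
      · right; rw [hC x ⟨hex, hx.2⟩ y ⟨hey, hy.2⟩]; exact max_eq_right h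
      · left; rw [hC x ⟨hex, hx.2⟩ y ⟨hey, hy.2⟩]; exact max_eq_left h
end

section
/- For every uninorm U : [0,1]² → [0,1] with neutral element e, the value U(1,0) belongs to {0,1}. -/
open Set

/-- For every uninorm, U(1,0) ∈ {0,1}. -/
theorem uninorm_one_zero (U : ℝ → ℝ → ℝ) (e : ℝ) (hU : Uninorm U e) :
    U 1 0 = 0 ∨ U 1 0 = 1 := by
  obtain ⟨he, hmap, hcomm, hassoc, hmono, hneut⟩ := hU
  have h0 : (0:ℝ) ∈ UnitI := ⟨le_refl 0, zero_le_one⟩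
  have h1 : (1:ℝ) ∈ UnitI := ⟨zero_le_one, le_refl 1⟩
  set a := U 1 0 with ha
  have haI : a ∈ UnitI := hmap 1 h1 0 h0
  -- U 1 1 = 1
  have h11 : U 1 1 = 1 := by
    have hle : U 1 1 ≤ 1 := (hmap 1 h1 1 h1).2
    have hge : U e 1 ≤ U 1 1 := (hmono e he 1 h1 1 h1 he.2).1
    rw [(hneut 1 h1).1] at hge
    linarith
  -- U 0 0 = 0
  have h00 : U 0 0 = 0 := by
    have hge : 0 ≤ U 0 0 := (hmap 0 h0 0 h0).1
    have hle : U 0 0 ≤ U 0 e := (hmono 0 h0 e he 0 h0 he.1).2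
    rw [(hneut 0 h0).2] at hle
    linarith
  -- U 1 a = a
  have h1a : U 1 a = a := by
    have := hassoc 1 h1 1 h1 0 h0
    rw [h11] at this
    rw [ha, ← this]
  -- U 0 a = a
  have h0a : U 0 a = a := by
    have h2 : U 0 (U 1 0) = U (U 0 1) 0 := (hassoc 0 h0 1 h1 0 h0).symm
    have h3 : U 0 1 = U 1 0 := hcomm 0 h0 1 h1
    have h4 : U (U 1 0) 0 = U 1 (U 0 0) := hassoc 1 h1 0 h0 0 h0
    rw [ha, h2, h3, h4, h00]
  rcases le_total a e with h | h
  · left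
    have hle : U 0 a ≤ U 0 e := (hmono a haI e he 0 h0 h).2
    rw [h0a, (hneut 0 h0).2] at hle
    linarith [haI.1]
  · right
    have hge : U 1 e ≤ U 1 a := (hmono e he a haI 1 h1 h).2
    rw [h1a, (hneut 1 h1).2] at hge
    linarith [haI.2]
end

section
/- For every uninorm U : [0,1]² → [0,1] with neutral element e, the value a = U(1,0) is an annihilator of U, i.e., U(a,x) = a for all x ∈ [0,1]. -/
open Set

/-- For every uninorm, the value U(1,0) is an annihilator of U. -/
theorem uninorm_one_zero_annihilator (U : ℝ → ℝ → ℝ) (e : ℝ) (hU : Uninorm U e) :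
    ∀ x ∈ UnitI, U (U 1 0) x = U 1 0 := by
  obtain ⟨he, hmaps, hcomm, hassoc, hmono, hneut⟩ := hU
  have h0 : (0 : ℝ) ∈ UnitI := ⟨le_refl 0, zero_le_one⟩
  have h1 : (1 : ℝ) ∈ UnitI := ⟨zero_le_one, le_refl 1⟩
  have ha : U 1 0 ∈ UnitI := hmaps 1 h1 0 h0
  -- U 1 1 = 1
  have h11 : U 1 1 = 1 := by
    have hub : U 1 1 ≤ 1 := (hmaps 1 h1 1 h1).2
    have hlb : U e 1 ≤ U 1 1 := (hmono e he 1 h1 1 h1 he.2).1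
    have := (hneut 1 h1).1
    linarith
  -- U 0 0 = 0
  have h00 : U 0 0 = 0 := by
    have hlb : 0 ≤ U 0 0 := (hmaps 0 h0 0 h0).1
    have hub : U e 0 ≤ U e 0 := le_refl _
    have hub' : U 0 0 ≤ U e 0 := (hmono 0 h0 e he 0 h0 he.1).1
    have := (hneut 0 h0).1
    linarith
  -- U a 1 = a
  have ha1 : U (U 1 0) 1 = U 1 0 := by
    have := hassoc 1 h1 0 h0 1 h1
    rw [this, hcomm 0 h0 1 h1]
    have h2 : U 1 (U 1 0) = U (U 1 1) 0 := (hassoc 1 h1 1 h1 0 h0).symm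
    rw [h2, h11]
  -- U a 0 = a
  have ha0 : U (U 1 0) 0 = U 1 0 := by
    have := hassoc 1 h1 0 h0 0 h0
    rw [this, h00]
  intro x hx
  have hle : U (U 1 0) x ≤ U (U 1 0) 1 := (hmono x hx 1 h1 (U 1 0) ha hx.2).2
  have hge : U (U 1 0) 0 ≤ U (U 1 0) x := (hmono 0 h0 x hx (U 1 0) ha hx.1).2
  linarith [ha1, ha0]
end

section
/- Let f : [0,1] → [-∞,∞] be a continuous strictly increasing bijection with f(0) = -∞ and f(1) = ∞. Then the binary function U(x,y) = f⁻¹(f(x) + f(y)) (with the convention that -∞ + ∞ is resolved consistently, e.g., equals -∞) is a uninorm with neutral element f⁻¹(0). -/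
open Set

/-- A continuous strictly increasing bijection f : [0,1] → [-∞,∞] with
f(0) = -∞, f(1) = ∞ additively generates a representable uninorm
U(x,y) = f⁻¹(f(x)+f(y)) with neutral element f⁻¹(0).  Here EReal addition
satisfies (-∞) + ∞ = ∞ + (-∞) = -∞. -/
theorem representable_uninorm (f : ℝ → EReal) (finv : EReal → ℝ)
    (hmono : StrictMonoOn f UnitI) (hcont : ContinuousOn f UnitI)
    (h0 : f 0 = ⊥) (h1 : f 1 = ⊤)
    (hinv₁ : ∀ x ∈ UnitI, finv (f x) = x)
    (hinv₂ : ∀ t : EReal, f (finv t) = t)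
    (hinv₃ : ∀ t : EReal, finv t ∈ UnitI) :
    Uninorm (fun x y => finv (f x + f y)) (finv 0) := by
  have hfinvmono : ∀ s t : EReal, s ≤ t → finv s ≤ finv t := by
    intro s t hst
    by_contra h
    push_neg at h
    have := hmono (hinv₃ t) (hinv₃ s) h
    rw [hinv₂, hinv₂] at this
    exact absurd hst (not_le.mpr this)
  refine ⟨hinv₃ 0, ?_, ?_, ?_, ?_, ?_⟩
  · intro x hx y hy; exact hinv₃ _
  · intro x hx y hy; simp [add_comm]
  · intro x hx y hy z hz
    simp only
    rw [hinv₂, hinv₂, add_assoc]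
  · intro x₁ h₁ x₂ h₂ y hy hle
    have h1' := hmono.monotoneOn h₁ h₂ hle
    constructor
    · exact hfinvmono _ _ (add_le_add_left h1' _)
    · exact hfinvmono _ _ (add_le_add_right h1' _)
  · intro x hx
    simp only
    constructor
    · rw [hinv₂ 0, zero_add, hinv₁ x hx]
    · rw [hinv₂ 0, add_zero, hinv₁ x hx]
end

section
/- Let U : [0,1]² → [0,1] be a uninorm with neutral element e whose underlying t-norm and t-conorm are continuous (as functions on [0,e]² and [e,1]² respectively). If a ∈ [0,1] is an idempotent point of U, then U is internal on {a} × [0,1], i.e., U(a,x) ∈ {a,x} for all x ∈ [0,1]. -/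
open Set

/-- For a uninorm with continuous underlying t-norm and t-conorm, U is
internal on {a} × [0,1] for every idempotent a. -/
theorem uninorm_idempotent_internal (U : ℝ → ℝ → ℝ) (e : ℝ) (hU : Uninorm U e)
    (hTcont : ContinuousOn (fun p : ℝ × ℝ => U p.1 p.2) (Set.Icc (0:ℝ) e ×ˢ Set.Icc (0:ℝ) e))
    (hCcont : ContinuousOn (fun p : ℝ × ℝ => U p.1 p.2) (Set.Icc e (1:ℝ) ×ˢ Set.Icc e (1:ℝ)))
    (a : ℝ) (ha : a ∈ UnitI) (hid : U a a = a) :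
    ∀ x ∈ UnitI, U a x = a ∨ U a x = x := by
  obtain ⟨he, hmaps, hcomm, hassoc, hmono, hneu⟩ := hU
  obtain ⟨he0, he1⟩ := he
  have heI : e ∈ UnitI := ⟨he0, he1⟩
  have hsub0 : Icc (0:ℝ) e ⊆ UnitI := Icc_subset_Icc le_rfl he1
  have hsub1 : Icc e (1:ℝ) ⊆ UnitI := Icc_subset_Icc he0 le_rfl
  -- IVT on the t-norm square
  have ivtT : ∀ b ∈ Icc (0:ℝ) e, ∀ lo ∈ Icc (0:ℝ) e, ∀ hi ∈ Icc (0:ℝ) e, lo ≤ hi →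
      ∀ y ∈ Icc (U b lo) (U b hi), ∃ t ∈ Icc (0:ℝ) e, U b t = y := by
    intro b hb lo hlo hi hhi hlh y hy
    have hc : ContinuousOn (fun t => U b t) (Icc lo hi) := by
      have h0 : ContinuousOn (fun t => U b t) (Icc (0:ℝ) e) := by
        have := hTcont.comp (f := fun t : ℝ => ((b, t) : ℝ × ℝ))
          (Continuous.continuousOn (by continuity)) (fun t ht => ⟨hb, ht⟩)
        exact this
      exact h0.mono (Icc_subset_Icc hlo.1 hhi.2)
    obtain ⟨t, ht, hte⟩ := intermediate_value_Icc hlh hc hy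
    exact ⟨t, ⟨hlo.1.trans ht.1, ht.2.trans hhi.2⟩, hte⟩
  -- IVT on the t-conorm square
  have ivtS : ∀ b ∈ Icc e (1:ℝ), ∀ lo ∈ Icc e (1:ℝ), ∀ hi ∈ Icc e (1:ℝ), lo ≤ hi →
      ∀ y ∈ Icc (U b lo) (U b hi), ∃ t ∈ Icc e (1:ℝ), U b t = y := by
    intro b hb lo hlo hi hhi hlh y hy
    have hc : ContinuousOn (fun t => U b t) (Icc lo hi) := by
      have h0 : ContinuousOn (fun t => U b t) (Icc e (1:ℝ)) := by
        have := hCcont.comp (f := fun t : ℝ => ((b, t) : ℝ × ℝ))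
          (Continuous.continuousOn (by continuity)) (fun t ht => ⟨hb, ht⟩)
        exact this
      exact h0.mono (Icc_subset_Icc hlo.1 hhi.2)
    obtain ⟨t, ht, hte⟩ := intermediate_value_Icc hlh hc hy
    exact ⟨t, ⟨hlo.1.trans ht.1, ht.2.trans hhi.2⟩, hte⟩
  have hne : ∀ x ∈ UnitI, U e x = x := fun x hx => (hneu x hx).1
  have hne' : ∀ x ∈ UnitI, U x e = x := fun x hx => (hneu x hx).2
  -- monotone in second argument
  have m2 : ∀ y ∈ UnitI, ∀ x₁ ∈ UnitI, ∀ x₂ ∈ UnitI, x₁ ≤ x₂ → U y x₁ ≤ U y x₂ :=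
    fun y hy x₁ h₁ x₂ h₂ h => (hmono x₁ h₁ x₂ h₂ y hy h).2
  have m1 : ∀ y ∈ UnitI, ∀ x₁ ∈ UnitI, ∀ x₂ ∈ UnitI, x₁ ≤ x₂ → U x₁ y ≤ U x₂ y :=
    fun y hy x₁ h₁ x₂ h₂ h => (hmono x₁ h₁ x₂ h₂ y hy h).1
  -- key: if a ≤ y ≤ e (a ≤ e) then U a y = a  (pure monotonicity)
  have keyT : a ≤ e → ∀ y ∈ UnitI, a ≤ y → y ≤ e → U a y = a := by
    intro hae y hy hay hye
    have h1 : U a y ≤ U a e := m2 a ha y hy e heI hye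
    have h2 : U a a ≤ U a y := m2 a ha a ha y hy hay
    rw [hne' a ha] at h1
    rw [hid] at h2
    linarith
  -- dual key: if e ≤ y ≤ a (e ≤ a) then U a y = a
  have keyS : e ≤ a → ∀ y ∈ UnitI, e ≤ y → y ≤ a → U a y = a := by
    intro hea y hy hey hya
    have h1 : U a y ≤ U a a := m2 a ha y hy a ha hya
    have h2 : U a e ≤ U a y := m2 a ha e heI y hy hey
    rw [hne' a ha] at h2
    rw [hid] at h1
    linarith
  intro x hx
  rcases le_total a e with hae | hea
  · -- a ≤ e
    have haT : a ∈ Icc (0:ℝ) e := ⟨ha.1, hae⟩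
    rcases le_total x e with hxe | hex
    · have hxT : x ∈ Icc (0:ℝ) e := ⟨hx.1, hxe⟩
      rcases le_total a x with hax | hxa
      · exact Or.inl (keyT hae x hx hax hxe)
      · -- x ≤ a ≤ e : U a x = x by IVT trick
        right
        have hUax_le : U a x ≤ x := by
          have := m1 x hx a ha e heI hae
          rwa [hne x hx] at this
        obtain ⟨t, htT, ht⟩ := ivtT a haT x hxT a haT hxa x
          ⟨hUax_le, by rw [hid]; exact hxa⟩
        have htI : t ∈ UnitI := hsub0 htT
        calc U a x = U a (U a t) := by rw [ht]
          _ = U (U a a) t := (hassoc a ha a ha t htI).symm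
          _ = U a t := by rw [hid]
          _ = x := ht
    · -- a ≤ e ≤ x
      set c := U a x with hc
      have hcI : c ∈ UnitI := hmaps a ha x hx
      have hac : a ≤ c := by
        have := m2 a ha e heI x hx hex
        rwa [hne' a ha] at this
      have hcx : c ≤ x := by
        have := m1 x hx a ha e heI hae
        rwa [hne x hx] at this
      have hUac : U a c = c := by
        calc U a (U a x) = U (U a a) x := (hassoc a ha a ha x hx).symm
          _ = U a x := by rw [hid]
      rcases le_total c e with hce | hec
      · left
        have := keyT hae c hcI hac hce
        rw [hUac] at this
        exact this
      · right
        have hcS : c ∈ Icc e (1:ℝ) := ⟨hec, hcI.2⟩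
        have hxS : x ∈ Icc e (1:ℝ) := ⟨hex, hx.2⟩
        have hx_le : x ≤ U c x := by
          have := m1 x hx e heI c hcI hec
          rwa [hne x hx] at this
        obtain ⟨t, htS, ht⟩ := ivtS c hcS e ⟨le_rfl, he1⟩ x hxS hex x
          ⟨by rw [hne' c hcI]; exact hcx, hx_le⟩
        have htI : t ∈ UnitI := hsub1 htS
        calc U a x = U a (U c t) := by rw [ht]
          _ = U (U a c) t := (hassoc a ha c hcI t htI).symm
          _ = U c t := by rw [hUac]
          _ = x := ht
  · -- e ≤ a
    have haS : a ∈ Icc e (1:ℝ) := ⟨hea, ha.2⟩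
    rcases le_total e x with hex | hxe
    · have hxS : x ∈ Icc e (1:ℝ) := ⟨hex, hx.2⟩
      rcases le_total x a with hxa | hax
      · exact Or.inl (keyS hea x hx hex hxa)
      · -- e ≤ a ≤ x : U a x = x by IVT trick
        right
        have hx_le : x ≤ U a x := by
          have := m1 x hx e heI a ha hea
          rwa [hne x hx] at this
        obtain ⟨t, htS, ht⟩ := ivtS a haS a haS x hxS hax x
          ⟨by rw [hid]; exact hax, hx_le⟩
        have htI : t ∈ UnitI := hsub1 htS
        calc U a x = U a (U a t) := by rw [ht]
          _ = U (U a a) t := (hassoc a ha a ha t htI).symm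
          _ = U a t := by rw [hid]
          _ = x := ht
    · -- x ≤ e ≤ a
      set c := U a x with hc
      have hcI : c ∈ UnitI := hmaps a ha x hx
      have hca : c ≤ a := by
        have := m2 a ha x hx e heI hxe
        rwa [hne' a ha] at this
      have hxc : x ≤ c := by
        have := m1 x hx e heI a ha hea
        rwa [hne x hx] at this
      have hUac : U a c = c := by
        calc U a (U a x) = U (U a a) x := (hassoc a ha a ha x hx).symm
          _ = U a x := by rw [hid]
      rcases le_total e c with hec | hce
      · left
        have := keyS hea c hcI hec hca
        rw [hUac] at this
        exact this
      · right
        have hcT : c ∈ Icc (0:ℝ) e := ⟨hcI.1, hce⟩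
        have hxT : x ∈ Icc (0:ℝ) e := ⟨hx.1, hxe⟩
        have hUcx_le : U c x ≤ x := by
          have := m1 x hx c hcI e heI hce
          rwa [hne x hx] at this
        obtain ⟨t, htT, ht⟩ := ivtT c hcT x hxT e ⟨he0, le_rfl⟩ hxe x
          ⟨hUcx_le, by rw [hne' c hcI]; exact hxc⟩
        have htI : t ∈ UnitI := hsub0 htT
        calc U a x = U a (U c t) := by rw [ht]
          _ = U (U a c) t := (hassoc a ha c hcI t htI).symm
          _ = U c t := by rw [hUac]
          _ = x := ht
end

section
/- Let U : [0,1]² → [0,1] be a uninorm with neutral element e whose underlying t-norm and t-conorm are continuous. Let a,b be idempotent elements with a < b and suppose U(x,x) ≠ x for all x ∈ (a,b). If c ∈ [0,1] is an idempotent element, then either U(c,x) = min(c,x) for all x ∈ (a,b), or U(c,x) = max(c,x) for all x ∈ (a,b). -/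
open Set

open Filter

namespace UninormAux

variable {U : ℝ → ℝ → ℝ} {e : ℝ}

lemma monoL (hU : Uninorm U e) {x₁ x₂ y : ℝ} (h1 : x₁ ∈ UnitI) (h2 : x₂ ∈ UnitI)
    (hy : y ∈ UnitI) (h : x₁ ≤ x₂) : U x₁ y ≤ U x₂ y :=
  (hU.2.2.2.2.1 x₁ h1 x₂ h2 y hy h).1

lemma monoR (hU : Uninorm U e) {x y₁ y₂ : ℝ} (hx : x ∈ UnitI) (h1 : y₁ ∈ UnitI)
    (h2 : y₂ ∈ UnitI) (h : y₁ ≤ y₂) : U x y₁ ≤ U x y₂ :=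
  (hU.2.2.2.2.1 y₁ h1 y₂ h2 x hx h).2

lemma neutL (hU : Uninorm U e) {x : ℝ} (hx : x ∈ UnitI) : U e x = x :=
  (hU.2.2.2.2.2 x hx).1

lemma neutR (hU : Uninorm U e) {x : ℝ} (hx : x ∈ UnitI) : U x e = x :=
  (hU.2.2.2.2.2 x hx).2

lemma mapsI (hU : Uninorm U e) {x y : ℝ} (hx : x ∈ UnitI) (hy : y ∈ UnitI) : U x y ∈ UnitI :=
  hU.2.1 x hx y hy

lemma assoc (hU : Uninorm U e) {x y z : ℝ} (hx : x ∈ UnitI) (hy : y ∈ UnitI) (hz : z ∈ UnitI) :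
    U (U x y) z = U x (U y z) := hU.2.2.2.1 x hx y hy z hz

lemma heI (hU : Uninorm U e) : e ∈ UnitI := hU.1

/-- U c ∘ (U c ·) = U c · for idempotent c -/
lemma fixc (hU : Uninorm U e) {c x : ℝ} (hc : c ∈ UnitI) (hidc : U c c = c)
    (hx : x ∈ UnitI) : U c (U c x) = U c x := by
  rw [← assoc hU hc hc hx, hidc]

/-- continuity of the section y ↦ U d y on [0,e] -/
lemma contT_right (hU : Uninorm U e)
    (hT : ContinuousOn (fun p : ℝ × ℝ => U p.1 p.2) (Set.Icc (0:ℝ) e ×ˢ Set.Icc (0:ℝ) e))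
    {d : ℝ} (hd : d ∈ Set.Icc (0:ℝ) e) : ContinuousOn (fun y => U d y) (Set.Icc (0:ℝ) e) := by
  have : ContinuousOn ((fun p : ℝ × ℝ => U p.1 p.2) ∘ (fun y => ((d : ℝ), y)))
      (Set.Icc (0:ℝ) e) := by
    apply hT.comp ((continuous_const.prodMk continuous_id).continuousOn)
    intro y hy
    exact ⟨hd, hy⟩
  exact this

lemma contT_left (hU : Uninorm U e)
    (hT : ContinuousOn (fun p : ℝ × ℝ => U p.1 p.2) (Set.Icc (0:ℝ) e ×ˢ Set.Icc (0:ℝ) e))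
    {d : ℝ} (hd : d ∈ Set.Icc (0:ℝ) e) : ContinuousOn (fun y => U y d) (Set.Icc (0:ℝ) e) := by
  have : ContinuousOn ((fun p : ℝ × ℝ => U p.1 p.2) ∘ (fun y => (y, (d : ℝ))))
      (Set.Icc (0:ℝ) e) := by
    apply hT.comp ((continuous_id.prodMk continuous_const).continuousOn)
    intro y hy
    exact ⟨hy, hd⟩
  exact this

lemma contC_right (hU : Uninorm U e)
    (hC : ContinuousOn (fun p : ℝ × ℝ => U p.1 p.2) (Set.Icc e (1:ℝ) ×ˢ Set.Icc e (1:ℝ)))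
    {d : ℝ} (hd : d ∈ Set.Icc e (1:ℝ)) : ContinuousOn (fun y => U d y) (Set.Icc e (1:ℝ)) := by
  have : ContinuousOn ((fun p : ℝ × ℝ => U p.1 p.2) ∘ (fun y => ((d : ℝ), y)))
      (Set.Icc e (1:ℝ)) := by
    apply hC.comp ((continuous_const.prodMk continuous_id).continuousOn)
    intro y hy
    exact ⟨hd, hy⟩
  exact this

lemma contC_left (hU : Uninorm U e)
    (hC : ContinuousOn (fun p : ℝ × ℝ => U p.1 p.2) (Set.Icc e (1:ℝ) ×ˢ Set.Icc e (1:ℝ)))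
    {d : ℝ} (hd : d ∈ Set.Icc e (1:ℝ)) : ContinuousOn (fun y => U y d) (Set.Icc e (1:ℝ)) := by
  have : ContinuousOn ((fun p : ℝ × ℝ => U p.1 p.2) ∘ (fun y => (y, (d : ℝ))))
      (Set.Icc e (1:ℝ)) := by
    apply hC.comp ((continuous_id.prodMk continuous_const).continuousOn)
    intro y hy
    exact ⟨hy, hd⟩
  exact this

/-- A2 : c idempotent ≤ e, c ≤ x ≤ e ⇒ U c x = c -/
lemma A2 (hU : Uninorm U e) {c x : ℝ} (hc : c ∈ UnitI) (hce : c ≤ e) (hidc : U c c = c)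
    (hx : x ∈ UnitI) (hcx : c ≤ x) (hxe : x ≤ e) : U c x = c := by
  have h1 : U c c ≤ U c x := monoR hU hc hc hx hcx
  have h2 : U c x ≤ U c e := monoR hU hc hx (heI hU) hxe
  rw [hidc] at h1
  rw [neutR hU hc] at h2
  linarith

/-- B2 : c idempotent ≥ e, e ≤ x ≤ c ⇒ U c x = c -/
lemma B2 (hU : Uninorm U e) {c x : ℝ} (hc : c ∈ UnitI) (hec : e ≤ c) (hidc : U c c = c)
    (hx : x ∈ UnitI) (hex : e ≤ x) (hxc : x ≤ c) : U c x = c := by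
  have h1 : U c e ≤ U c x := monoR hU hc (heI hU) hx hex
  have h2 : U c x ≤ U c c := monoR hU hc hx hc hxc
  rw [hidc] at h2
  rw [neutR hU hc] at h1
  linarith

/-- A1 : c idempotent ≤ e, x ≤ c ⇒ U c x = x -/
lemma A1 (hU : Uninorm U e)
    (hT : ContinuousOn (fun p : ℝ × ℝ => U p.1 p.2) (Set.Icc (0:ℝ) e ×ˢ Set.Icc (0:ℝ) e))
    {c x : ℝ} (hc : c ∈ UnitI) (hce : c ≤ e) (hidc : U c c = c)
    (hx : x ∈ UnitI) (hxc : x ≤ c) : U c x = x := by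
  have hcE : c ∈ Set.Icc (0:ℝ) e := ⟨hc.1, hce⟩
  have h0 : (0:ℝ) ∈ UnitI := ⟨le_refl 0, zero_le_one⟩
  have hUc0 : U c 0 = 0 := by
    have h1 : U c 0 ≤ U e 0 := monoL hU hc (heI hU) h0 hce
    rw [neutL hU h0] at h1
    have h2 : (0:ℝ) ≤ U c 0 := (mapsI hU hc h0).1
    linarith
  have hUcc : U c c = c := hidc
  have hcont : ContinuousOn (fun y => U c y) (Set.Icc 0 c) :=
    (contT_right hU hT hcE).mono (Set.Icc_subset_Icc le_rfl hce)
  have hIVT := intermediate_value_Icc hc.1 hcont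
  rw [hUc0, hUcc] at hIVT
  obtain ⟨z, hz, hUz⟩ := hIVT ⟨hx.1, hxc⟩
  have hUz' : U c z = x := hUz
  have hzI : z ∈ UnitI := ⟨hz.1, le_trans hz.2 hc.2⟩
  calc U c x = U c (U c z) := by rw [hUz']
    _ = U c z := fixc hU hc hidc hzI
    _ = x := hUz'

/-- B1 : c idempotent ≥ e, c ≤ x ⇒ U c x = x -/
lemma B1 (hU : Uninorm U e)
    (hC : ContinuousOn (fun p : ℝ × ℝ => U p.1 p.2) (Set.Icc e (1:ℝ) ×ˢ Set.Icc e (1:ℝ)))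
    {c x : ℝ} (hc : c ∈ UnitI) (hec : e ≤ c) (hidc : U c c = c)
    (hx : x ∈ UnitI) (hcx : c ≤ x) : U c x = x := by
  have hcE : c ∈ Set.Icc e (1:ℝ) := ⟨hec, hc.2⟩
  have h1I : (1:ℝ) ∈ UnitI := ⟨zero_le_one, le_refl 1⟩
  have hUc1 : U c 1 = 1 := by
    have h1 : U e 1 ≤ U c 1 := monoL hU (heI hU) hc h1I hec
    rw [neutL hU h1I] at h1
    have h2 : U c 1 ≤ 1 := (mapsI hU hc h1I).2
    linarith
  have hcont : ContinuousOn (fun y => U c y) (Set.Icc c 1) :=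
    (contC_right hU hC hcE).mono (Set.Icc_subset_Icc hec le_rfl)
  have hIVT := intermediate_value_Icc hc.2 hcont
  rw [hUc1, hidc] at hIVT
  obtain ⟨z, hz, hUz⟩ := hIVT ⟨hcx, hx.2⟩
  have hUz' : U c z = x := hUz
  have hzI : z ∈ UnitI := ⟨le_trans hc.1 hz.1, hz.2⟩
  calc U c x = U c (U c z) := by rw [hUz']
    _ = U c z := fixc hU hc hidc hzI
    _ = x := hUz'


/-- internality on the t-norm side: c idempotent ≥ e, x ≤ e ⇒ U c x ∈ {x, c} -/
lemma intT (hU : Uninorm U e)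
    (hT : ContinuousOn (fun p : ℝ × ℝ => U p.1 p.2) (Set.Icc (0:ℝ) e ×ˢ Set.Icc (0:ℝ) e))
    {c x : ℝ} (hc : c ∈ UnitI) (hec : e ≤ c) (hidc : U c c = c)
    (hx : x ∈ UnitI) (hxe : x ≤ e) : U c x = x ∨ U c x = c := by
  set d := U c x with hd
  have hdI : d ∈ UnitI := mapsI hU hc hx
  have hUcd : U c d = d := fixc hU hc hidc hx
  have hxd : x ≤ d := by
    have := monoL hU (heI hU) hc hx hec
    rwa [neutL hU hx] at this
  have hdc : d ≤ c := by
    have := monoR hU hc hx hc (le_trans hxe hec)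
    rwa [hidc] at this
  rcases le_or_gt d e with hde | hed
  · -- d ≤ e : show d = x via IVT
    left
    have hdE : d ∈ Set.Icc (0:ℝ) e := ⟨hdI.1, hde⟩
    have h0 : (0:ℝ) ∈ UnitI := ⟨le_refl 0, zero_le_one⟩
    have hUd0 : U d 0 = 0 := by
      have h1 : U d 0 ≤ U e 0 := monoL hU hdI (heI hU) h0 hde
      rw [neutL hU h0] at h1
      have h2 : (0:ℝ) ≤ U d 0 := (mapsI hU hdI h0).1
      linarith
    have hUde : U d e = d := neutR hU hdI
    have hIVT := intermediate_value_Icc (le_trans hx.1 hxe : (0:ℝ) ≤ e) (contT_right hU hT hdE)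
    rw [hUd0, hUde] at hIVT
    obtain ⟨z, hz, hUz⟩ := hIVT ⟨hx.1, hxd⟩
    have hUz' : U d z = x := hUz
    have hzI : z ∈ UnitI := ⟨hz.1, le_trans hz.2 (heI hU).2⟩
    have : U c x = x := by
      calc U c x = U c (U d z) := by rw [hUz']
        _ = U (U c d) z := (assoc hU hc hdI hzI).symm
        _ = U d z := by rw [hUcd]
        _ = x := hUz'
    linarith [this]
  · -- e < d : then d = c
    right
    have := B2 hU hc hec hidc hdI (le_of_lt hed) hdc
    rw [hUcd] at this
    exact this

/-- internality on the t-conorm side: c idempotent ≤ e, x ≥ e ⇒ U c x ∈ {x, c} -/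
lemma intC (hU : Uninorm U e)
    (hC : ContinuousOn (fun p : ℝ × ℝ => U p.1 p.2) (Set.Icc e (1:ℝ) ×ˢ Set.Icc e (1:ℝ)))
    {c x : ℝ} (hc : c ∈ UnitI) (hce : c ≤ e) (hidc : U c c = c)
    (hx : x ∈ UnitI) (hex : e ≤ x) : U c x = x ∨ U c x = c := by
  set d := U c x with hd
  have hdI : d ∈ UnitI := mapsI hU hc hx
  have hdx : d ≤ x := by
    have := monoL hU hc (heI hU) hx hce
    rwa [neutL hU hx] at this
  have hcd : c ≤ d := by
    have := monoR hU hc (heI hU) hx hex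
    rwa [neutR hU hc] at this
  have hUcd : U c d = d := fixc hU hc hidc hx
  rcases le_or_gt e d with hed | hde
  · -- e ≤ d : show d = x via IVT
    left
    have hdE : d ∈ Set.Icc e (1:ℝ) := ⟨hed, hdI.2⟩
    have h1I : (1:ℝ) ∈ UnitI := ⟨zero_le_one, le_refl 1⟩
    have hUd1 : U d 1 = 1 := by
      have h1 : U e 1 ≤ U d 1 := monoL hU (heI hU) hdI h1I hed
      rw [neutL hU h1I] at h1
      have h2 : U d 1 ≤ 1 := (mapsI hU hdI h1I).2
      linarith
    have hUde : U d e = d := neutR hU hdI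
    have hIVT := intermediate_value_Icc (heI hU).2 (contC_right hU hC hdE)
    rw [hUd1, hUde] at hIVT
    obtain ⟨z, hz, hUz⟩ := hIVT ⟨hdx, hx.2⟩
    have hUz' : U d z = x := hUz
    have hzI : z ∈ UnitI := ⟨le_trans (heI hU).1 hz.1, hz.2⟩
    have : U c x = x := by
      calc U c x = U c (U d z) := by rw [hUz']
        _ = U (U c d) z := (assoc hU hc hdI hzI).symm
        _ = U d z := by rw [hUcd]
        _ = x := hUz'
    linarith [this]
  · -- d < e : then d = c
    right
    have : U c d = c := by
      have h1 : U c c ≤ U c d := monoR hU hc hc hdI hcd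
      have h2 : U c d ≤ U c e := monoR hU hc hdI (heI hU) (le_of_lt hde)
      rw [hidc] at h1
      rw [neutR hU hc] at h2
      linarith
    rw [hUcd] at this
    exact this


lemma cruxT (hU : Uninorm U e)
    (hT : ContinuousOn (fun p : ℝ × ℝ => U p.1 p.2) (Set.Icc (0:ℝ) e ×ˢ Set.Icc (0:ℝ) e))
    {a b c : ℝ} (ha : a ∈ UnitI) (hb : b ∈ UnitI) (hc : c ∈ UnitI)
    (hab : a < b) (hbe : b ≤ e) (hida : U a a = a)
    (hno : ∀ x ∈ Set.Ioo a b, U x x ≠ x)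
    (hec : e ≤ c) (hidc : U c c = c) :
    (∀ x ∈ Set.Ioo a b, U c x = min c x) ∨ (∀ x ∈ Set.Ioo a b, U c x = max c x) := by
  have hmemI : ∀ x ∈ Set.Ioo a b, x ∈ UnitI := fun x hx =>
    ⟨le_trans ha.1 hx.1.le, le_trans hx.2.le hb.2⟩
  have hxe' : ∀ x ∈ Set.Ioo a b, x ≤ e := fun x hx => le_trans hx.2.le hbe
  have hxc : ∀ x ∈ Set.Ioo a b, x < c := fun x hx => lt_of_lt_of_le hx.2 (le_trans hbe hec)
  have hint : ∀ x ∈ Set.Ioo a b, U c x = x ∨ U c x = c := fun x hx =>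
    intT hU hT hc hec hidc (hmemI x hx) (hxe' x hx)
  by_cases hmin : ∀ x ∈ Set.Ioo a b, U c x = x
  · left; intro x hx; rw [hmin x hx, min_eq_right (hxc x hx).le]
  by_cases hmax : ∀ x ∈ Set.Ioo a b, U c x = c
  · right; intro x hx; rw [hmax x hx, max_eq_left (hxc x hx).le]
  exfalso
  push_neg at hmin hmax
  obtain ⟨p, hp, hpne⟩ := hmin
  have hpc : U c p = c := (hint p hp).resolve_left hpne
  obtain ⟨q, hq, hqne⟩ := hmax
  have hqq : U c q = q := (hint q hq).resolve_right hqne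
  set S : Set ℝ := {x | x ∈ Set.Ioo a b ∧ U c x = c} with hS
  have hpS : p ∈ S := ⟨hp, hpc⟩
  have hSne : S.Nonempty := ⟨p, hpS⟩
  have hbdd : BddBelow S := ⟨a, fun x hx => hx.1.1.le⟩
  set t := sInf S with ht
  have htp : t ≤ p := csInf_le hbdd hpS
  have hqt : q ≤ t := by
    apply le_csInf hSne
    intro x hx
    by_contra hlt
    push_neg at hlt
    have h1 : U c x ≤ U c q := monoR hU hc (hmemI x hx.1) (hmemI q hq) hlt.le
    rw [hx.2, hqq] at h1
    exact absurd h1 (not_le.mpr (hxc q hq))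
  have hat : a < t := lt_of_lt_of_le hq.1 hqt
  have htb : t < b := lt_of_le_of_lt htp hp.2
  have htI : t ∈ Set.Ioo a b := ⟨hat, htb⟩
  have hpre : ∀ x ∈ Set.Ioo a t, U c x = x := by
    intro x hx
    have hxab : x ∈ Set.Ioo a b := ⟨hx.1, lt_trans hx.2 htb⟩
    have hnS : x ∉ S := notMem_of_lt_csInf hx.2 hbdd
    rcases hint x hxab with h | h
    · exact h
    · exact absurd ⟨hxab, h⟩ hnS
  have hpost : ∀ y ∈ Set.Ioo t b, U c y = c := by
    intro y hy
    have hyab : y ∈ Set.Ioo a b := ⟨lt_trans hat hy.1, hy.2⟩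
    obtain ⟨x', hx'S, hx'y⟩ := exists_lt_of_csInf_lt hSne hy.1
    have h1 : U c x' ≤ U c y := monoR hU hc (hmemI x' hx'S.1) (hmemI y hyab) hx'y.le
    rw [hx'S.2] at h1
    rcases hint y hyab with h | h
    · rw [h] at h1
      exact absurd h1 (not_le.mpr (hxc y hyab))
    · exact h
  have hyx : ∀ y ∈ Set.Ioo t b, ∀ x ∈ Set.Ioo a t, U y x = x := by
    intro y hy x hx
    have hyab : y ∈ Set.Ioo a b := ⟨lt_trans hat hy.1, hy.2⟩
    have hxab : x ∈ Set.Ioo a b := ⟨hx.1, lt_trans hx.2 htb⟩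
    have hyI := hmemI y hyab
    have hxI := hmemI x hxab
    set z := U y x with hz
    have hzI : z ∈ UnitI := mapsI hU hyI hxI
    have hza : a ≤ z := by
      have h1 : U a x ≤ U y x := monoL hU ha hyI hxI hyab.1.le
      have h2 : U a a ≤ U a x := monoR hU ha ha hxI hxab.1.le
      rw [hida] at h2
      exact le_trans h2 h1
    have hzx : z ≤ x := by
      have h1 : U y x ≤ U e x := monoL hU hyI (heI hU) hxI (hxe' y hyab)
      rw [neutL hU hxI] at h1
      exact h1
    have hfz : U c z = x := by
      calc U c (U y x) = U (U c y) x := (assoc hU hc hyI hxI).symm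
        _ = U c x := by rw [hpost y hy]
        _ = x := hpre x hx
    rcases eq_or_lt_of_le hza with hEq | hlt
    · exfalso
      have hia := intT hU hT hc hec hidc ha (le_trans hab.le hbe)
      rw [← hEq] at hfz
      rcases hia with h | h
      · rw [h] at hfz; exact hxab.1.ne hfz
      · rw [h] at hfz; exact (hxc x hxab).ne' hfz
    · have hzab : z ∈ Set.Ioo a b := ⟨hlt, lt_of_le_of_lt hzx hxab.2⟩
      rcases hint z hzab with h | h
      · rw [h] at hfz; exact hfz
      · rw [h] at hfz; exact absurd hfz ((hxc x hxab).ne')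
  have htE : t ∈ Set.Icc (0:ℝ) e := ⟨le_trans ha.1 hat.le, le_trans htb.le hbe⟩
  have hstep1 : ∀ x ∈ Set.Ioo a t, U t x = x := by
    intro x hx
    have hxab : x ∈ Set.Ioo a b := ⟨hx.1, lt_trans hx.2 htb⟩
    have hxE : x ∈ Set.Icc (0:ℝ) e := ⟨le_trans ha.1 hx.1.le, hxe' x hxab⟩
    have hcont : ContinuousOn (fun y => U y x) (Set.Icc (0:ℝ) e) := contT_left hU hT hxE
    have hcw : ContinuousWithinAt (fun y => U y x) (Set.Ioo t b) t := by
      apply (hcont t htE).mono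
      intro y hy
      exact ⟨le_trans htE.1 hy.1.le, le_trans hy.2.le hbe⟩
    have hclo : t ∈ closure (Set.Ioo t b) := by
      rw [closure_Ioo (ne_of_lt htb)]
      exact ⟨le_refl t, htb.le⟩
    have hnb : (nhdsWithin t (Set.Ioo t b)).NeBot := mem_closure_iff_nhdsWithin_neBot.mp hclo
    have h1 : Filter.Tendsto (fun y => U y x) (nhdsWithin t (Set.Ioo t b)) (nhds (U t x)) := hcw
    have h2 : Filter.Tendsto (fun y => U y x) (nhdsWithin t (Set.Ioo t b)) (nhds x) := by
      apply Filter.Tendsto.congr' _ tendsto_const_nhds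
      filter_upwards [self_mem_nhdsWithin] with y hy
      exact (hyx y hy x hx).symm
    exact tendsto_nhds_unique h1 h2
  have hstep2 : U t t = t := by
    have hcont : ContinuousOn (fun x => U t x) (Set.Icc (0:ℝ) e) := contT_right hU hT htE
    have hcw : ContinuousWithinAt (fun x => U t x) (Set.Ioo a t) t := by
      apply (hcont t htE).mono
      intro y hy
      exact ⟨le_trans ha.1 hy.1.le, hy.2.le.trans htE.2⟩
    have hclo : t ∈ closure (Set.Ioo a t) := by
      rw [closure_Ioo (ne_of_lt hat)]
      exact ⟨hat.le, le_refl t⟩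
    have hnb : (nhdsWithin t (Set.Ioo a t)).NeBot := mem_closure_iff_nhdsWithin_neBot.mp hclo
    have h1 : Filter.Tendsto (fun x => U t x) (nhdsWithin t (Set.Ioo a t)) (nhds (U t t)) := hcw
    have h2 : Filter.Tendsto (fun x => U t x) (nhdsWithin t (Set.Ioo a t)) (nhds t) := by
      have hid : Filter.Tendsto (fun x : ℝ => x) (nhdsWithin t (Set.Ioo a t)) (nhds t) :=
        Filter.tendsto_id.mono_left nhdsWithin_le_nhds
      apply Filter.Tendsto.congr' _ hid
      filter_upwards [self_mem_nhdsWithin] with y hy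
      exact (hstep1 y hy).symm
    exact tendsto_nhds_unique h1 h2
  exact hno t htI hstep2


lemma cruxC (hU : Uninorm U e)
    (hC : ContinuousOn (fun p : ℝ × ℝ => U p.1 p.2) (Set.Icc e (1:ℝ) ×ˢ Set.Icc e (1:ℝ)))
    {a b c : ℝ} (ha : a ∈ UnitI) (hb : b ∈ UnitI) (hc : c ∈ UnitI)
    (hab : a < b) (hea : e ≤ a) (hidb : U b b = b)
    (hno : ∀ x ∈ Set.Ioo a b, U x x ≠ x)
    (hce : c ≤ e) (hidc : U c c = c) :
    (∀ x ∈ Set.Ioo a b, U c x = min c x) ∨ (∀ x ∈ Set.Ioo a b, U c x = max c x) := by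
  have hmemI : ∀ x ∈ Set.Ioo a b, x ∈ UnitI := fun x hx =>
    ⟨le_trans ha.1 hx.1.le, le_trans hx.2.le hb.2⟩
  have hex' : ∀ x ∈ Set.Ioo a b, e ≤ x := fun x hx => le_trans hea hx.1.le
  have hcx : ∀ x ∈ Set.Ioo a b, c < x := fun x hx => lt_of_le_of_lt (le_trans hce hea) hx.1
  have hint : ∀ x ∈ Set.Ioo a b, U c x = x ∨ U c x = c := fun x hx =>
    intC hU hC hc hce hidc (hmemI x hx) (hex' x hx)
  by_cases hmax : ∀ x ∈ Set.Ioo a b, U c x = x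
  · right; intro x hx; rw [hmax x hx, max_eq_right (hcx x hx).le]
  by_cases hmin : ∀ x ∈ Set.Ioo a b, U c x = c
  · left; intro x hx; rw [hmin x hx, min_eq_left (hcx x hx).le]
  exfalso
  push_neg at hmax hmin
  obtain ⟨p, hp, hpne⟩ := hmax
  have hpc : U c p = c := (hint p hp).resolve_left hpne
  obtain ⟨q, hq, hqne⟩ := hmin
  have hqq : U c q = q := (hint q hq).resolve_right hqne
  set S : Set ℝ := {x | x ∈ Set.Ioo a b ∧ U c x = c} with hS
  have hpS : p ∈ S := ⟨hp, hpc⟩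
  have hSne : S.Nonempty := ⟨p, hpS⟩
  have hbdd : BddAbove S := ⟨b, fun x hx => hx.1.2.le⟩
  set t := sSup S with ht
  have htp : p ≤ t := le_csSup hbdd hpS
  have hqt : t ≤ q := by
    apply csSup_le hSne
    intro x hx
    by_contra hlt
    push_neg at hlt
    have h1 : U c q ≤ U c x := monoR hU hc (hmemI q hq) (hmemI x hx.1) hlt.le
    rw [hx.2, hqq] at h1
    exact absurd h1 (not_le.mpr (hcx q hq))
  have hat : a < t := lt_of_lt_of_le hp.1 htp
  have htb : t < b := lt_of_le_of_lt hqt hq.2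
  have htI : t ∈ Set.Ioo a b := ⟨hat, htb⟩
  have hpost : ∀ x ∈ Set.Ioo t b, U c x = x := by
    intro x hx
    have hxab : x ∈ Set.Ioo a b := ⟨lt_trans hat hx.1, hx.2⟩
    have hnS : x ∉ S := notMem_of_csSup_lt hx.1 hbdd
    rcases hint x hxab with h | h
    · exact h
    · exact absurd ⟨hxab, h⟩ hnS
  have hpre : ∀ y ∈ Set.Ioo a t, U c y = c := by
    intro y hy
    have hyab : y ∈ Set.Ioo a b := ⟨hy.1, lt_trans hy.2 htb⟩
    obtain ⟨x', hx'S, hx'y⟩ := exists_lt_of_lt_csSup hSne hy.2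
    have h1 : U c y ≤ U c x' := monoR hU hc (hmemI y hyab) (hmemI x' hx'S.1) hx'y.le
    rw [hx'S.2] at h1
    rcases hint y hyab with h | h
    · rw [h] at h1
      exact absurd h1 (not_le.mpr (hcx y hyab))
    · exact h
  have hyx : ∀ y ∈ Set.Ioo a t, ∀ x ∈ Set.Ioo t b, U y x = x := by
    intro y hy x hx
    have hyab : y ∈ Set.Ioo a b := ⟨hy.1, lt_trans hy.2 htb⟩
    have hxab : x ∈ Set.Ioo a b := ⟨lt_trans hat hx.1, hx.2⟩
    have hyI := hmemI y hyab
    have hxI := hmemI x hxab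
    set z := U y x with hz
    have hzI : z ∈ UnitI := mapsI hU hyI hxI
    have hzb : z ≤ b := by
      have h1 : U y x ≤ U b x := monoL hU hyI hb hxI hyab.2.le
      have h2 : U b x ≤ U b b := monoR hU hb hxI hb hxab.2.le
      rw [hidb] at h2
      exact le_trans h1 h2
    have hxz : x ≤ z := by
      have h1 : U e x ≤ U y x := monoL hU (heI hU) hyI hxI (hex' y hyab)
      rw [neutL hU hxI] at h1
      exact h1
    have hfz : U c z = x := by
      calc U c (U y x) = U (U c y) x := (assoc hU hc hyI hxI).symm
        _ = U c x := by rw [hpre y hy]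
        _ = x := hpost x hx
    rcases eq_or_lt_of_le hzb with hEq | hlt
    · exfalso
      have hib := intC hU hC hc hce hidc hb (le_trans hea hab.le)
      rw [hEq] at hfz
      rcases hib with h | h
      · rw [h] at hfz; exact hxab.2.ne hfz.symm
      · rw [h] at hfz; exact (hcx x hxab).ne hfz
    · have hzab : z ∈ Set.Ioo a b := ⟨lt_of_lt_of_le hxab.1 hxz, hlt⟩
      rcases hint z hzab with h | h
      · rw [h] at hfz; exact hfz
      · rw [h] at hfz; exact absurd hfz ((hcx x hxab).ne)
  have htE : t ∈ Set.Icc e (1:ℝ) := ⟨le_trans hea hat.le, le_trans htb.le hb.2⟩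
  have hstep1 : ∀ x ∈ Set.Ioo t b, U t x = x := by
    intro x hx
    have hxab : x ∈ Set.Ioo a b := ⟨lt_trans hat hx.1, hx.2⟩
    have hxE : x ∈ Set.Icc e (1:ℝ) := ⟨hex' x hxab, le_trans hx.2.le hb.2⟩
    have hcont : ContinuousOn (fun y => U y x) (Set.Icc e (1:ℝ)) := contC_left hU hC hxE
    have hcw : ContinuousWithinAt (fun y => U y x) (Set.Ioo a t) t := by
      apply (hcont t htE).mono
      intro y hy
      exact ⟨le_trans hea hy.1.le, le_trans hy.2.le htE.2⟩
    have hclo : t ∈ closure (Set.Ioo a t) := by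
      rw [closure_Ioo (ne_of_lt hat)]
      exact ⟨hat.le, le_refl t⟩
    have hnb : (nhdsWithin t (Set.Ioo a t)).NeBot := mem_closure_iff_nhdsWithin_neBot.mp hclo
    have h1 : Filter.Tendsto (fun y => U y x) (nhdsWithin t (Set.Ioo a t)) (nhds (U t x)) := hcw
    have h2 : Filter.Tendsto (fun y => U y x) (nhdsWithin t (Set.Ioo a t)) (nhds x) := by
      apply Filter.Tendsto.congr' _ tendsto_const_nhds
      filter_upwards [self_mem_nhdsWithin] with y hy
      exact (hyx y hy x hx).symm
    exact tendsto_nhds_unique h1 h2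
  have hstep2 : U t t = t := by
    have hcont : ContinuousOn (fun x => U t x) (Set.Icc e (1:ℝ)) := contC_right hU hC htE
    have hcw : ContinuousWithinAt (fun x => U t x) (Set.Ioo t b) t := by
      apply (hcont t htE).mono
      intro y hy
      exact ⟨le_trans htE.1 hy.1.le, le_trans hy.2.le hb.2⟩
    have hclo : t ∈ closure (Set.Ioo t b) := by
      rw [closure_Ioo (ne_of_lt htb)]
      exact ⟨le_refl t, htb.le⟩
    have hnb : (nhdsWithin t (Set.Ioo t b)).NeBot := mem_closure_iff_nhdsWithin_neBot.mp hclo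
    have h1 : Filter.Tendsto (fun x => U t x) (nhdsWithin t (Set.Ioo t b)) (nhds (U t t)) := hcw
    have h2 : Filter.Tendsto (fun x => U t x) (nhdsWithin t (Set.Ioo t b)) (nhds t) := by
      have hid : Filter.Tendsto (fun x : ℝ => x) (nhdsWithin t (Set.Ioo t b)) (nhds t) :=
        Filter.tendsto_id.mono_left nhdsWithin_le_nhds
      apply Filter.Tendsto.congr' _ hid
      filter_upwards [self_mem_nhdsWithin] with y hy
      exact (hstep1 y hy).symm
    exact tendsto_nhds_unique h1 h2
  exact hno t htI hstep2

end UninormAux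

open UninormAux

/-- If a < b are idempotent with no idempotent points strictly between them,
then every idempotent c acts as min or as max uniformly on (a,b). -/
theorem uninorm_idempotent_min_or_max (U : ℝ → ℝ → ℝ) (e : ℝ) (hU : Uninorm U e)
    (hTcont : ContinuousOn (fun p : ℝ × ℝ => U p.1 p.2) (Set.Icc (0:ℝ) e ×ˢ Set.Icc (0:ℝ) e))
    (hCcont : ContinuousOn (fun p : ℝ × ℝ => U p.1 p.2) (Set.Icc e (1:ℝ) ×ˢ Set.Icc e (1:ℝ)))
    (a b : ℝ) (ha : a ∈ UnitI) (hb : b ∈ UnitI) (hab : a < b)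
    (hida : U a a = a) (hidb : U b b = b)
    (hno : ∀ x ∈ Set.Ioo a b, U x x ≠ x)
    (c : ℝ) (hc : c ∈ UnitI) (hidc : U c c = c) :
    (∀ x ∈ Set.Ioo a b, U c x = min c x) ∨ (∀ x ∈ Set.Ioo a b, U c x = max c x) := by
  have he : e ∈ UnitI := hU.1
  have hmemI : ∀ x ∈ Set.Ioo a b, x ∈ UnitI := fun x hx =>
    ⟨le_trans ha.1 hx.1.le, le_trans hx.2.le hb.2⟩
  have heab : b ≤ e ∨ e ≤ a := by
    by_contra h
    push_neg at h
    exact hno e ⟨h.2, h.1⟩ (neutL hU he)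
  have hcab : c ≤ a ∨ b ≤ c := by
    by_contra h
    push_neg at h
    exact hno c ⟨h.1, h.2⟩ hidc
  rcases heab with hbe | hea
  · rcases le_total c e with hce | hec
    · rcases hcab with h | h
      · left
        intro x hx
        rw [A2 hU hc hce hidc (hmemI x hx) (le_trans h hx.1.le) (le_trans hx.2.le hbe)]
        exact (min_eq_left (le_trans h hx.1.le)).symm
      · left
        intro x hx
        rw [A1 hU hTcont hc hce hidc (hmemI x hx) (le_trans hx.2.le h)]
        exact (min_eq_right (le_trans hx.2.le h)).symm
    · exact cruxT hU hTcont ha hb hc hab hbe hida hno hec hidc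
  · rcases le_total e c with hec | hce
    · rcases hcab with h | h
      · right
        intro x hx
        rw [B1 hU hCcont hc hec hidc (hmemI x hx) (le_trans h hx.1.le)]
        exact (max_eq_right (le_trans h hx.1.le)).symm
      · right
        intro x hx
        rw [B2 hU hc hec hidc (hmemI x hx) (le_trans hea hx.1.le) (le_trans hx.2.le h)]
        exact (max_eq_left (le_trans hx.2.le h)).symm
    · exact cruxC hU hCcont ha hb hc hab hea hidb hno hce hidc
end

section
/- Let U : [0,1]² → [0,1] be a uninorm with neutral element e ∈ (0,1) such that there exist x₁, x₂ ∈ (0,1) with U(x₁,x₂) = 0. Then the binary function U_* defined by U_*(x,y) = 0 if min(x,y) = 0, U_*(x,y) = 1 if min(x,y) > 0 and max(x,y) = 1, and U_*(x,y) = U(x,y) otherwise, is not associative. -/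
open Set

/-- If a proper uninorm has nilpotent elements, i.e. U(x₁,x₂) = 0 for some
x₁, x₂ ∈ (0,1), then the modification U_* (annihilator 0 on the border,
value 1 on the rest of the border) is not associative. -/
theorem Ustar_not_associative (U : ℝ → ℝ → ℝ) (e : ℝ) (hU : Uninorm U e)
    (he : e ∈ Set.Ioo (0:ℝ) 1)
    (x₁ x₂ : ℝ) (hx₁ : x₁ ∈ Set.Ioo (0:ℝ) 1) (hx₂ : x₂ ∈ Set.Ioo (0:ℝ) 1)
    (hnil : U x₁ x₂ = 0) :
    ¬ Assoc2 (fun x y => if min x y = 0 then 0 else if max x y = 1 then 1 else U x y) := by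
  intro h
  obtain ⟨hx1a, hx1b⟩ := hx₁
  obtain ⟨hx2a, hx2b⟩ := hx₂
  have h1 : x₁ ∈ UnitI := ⟨le_of_lt hx1a, le_of_lt hx1b⟩
  have h2 : x₂ ∈ UnitI := ⟨le_of_lt hx2a, le_of_lt hx2b⟩
  have h3 : (1:ℝ) ∈ UnitI := ⟨zero_le_one, le_refl 1⟩
  have key := h x₁ h1 x₂ h2 1 h3
  simp only at key
  have hmin : min x₁ x₂ ≠ 0 := ne_of_gt (lt_min hx1a hx2a)
  have hmax : max x₁ x₂ ≠ 1 := ne_of_lt (max_lt hx1b hx2b)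
  rw [if_neg hmin, if_neg hmax, hnil] at key
  have hmin2 : min x₂ (1:ℝ) ≠ 0 := ne_of_gt (lt_min hx2a one_pos)
  have hmax2 : max x₂ (1:ℝ) = 1 := max_eq_right (le_of_lt hx2b)
  rw [if_neg hmin2, hmax2, if_pos rfl] at key
  have hmin3 : min x₁ (1:ℝ) ≠ 0 := ne_of_gt (lt_min hx1a one_pos)
  have hmax3 : max x₁ (1:ℝ) = 1 := max_eq_right (le_of_lt hx1b)
  rw [if_neg hmin3, hmax3, if_pos rfl, if_pos (min_eq_left zero_le_one)] at key
  exact zero_ne_one key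
end

section
/- Let U : [0,1]² → [0,1] be a uninorm such that for all x₁, x₂ ∈ (0,1) one has U(x₁,x₂) ∉ {0,1}. Then the binary function U* given by U*(x,y) = 1 if max(x,y)=1, U*(x,y) = 0 if min(x,y)=0 and max(x,y)<1, and U*(x,y) = U(x,y) otherwise, is a uninorm (with the same neutral element as U, assuming the neutral element e of U satisfies e ∈ (0,1)). -/
open Set

/-- If U has no nilpotent elements then the modification U* (value 1 whenever
max(x,y) = 1, value 0 whenever min(x,y) = 0 and max(x,y) < 1) is a uninorm
with the same neutral element. -/
theorem Ustar_uninorm (U : ℝ → ℝ → ℝ) (e : ℝ) (hU : Uninorm U e)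
    (he : e ∈ Set.Ioo (0:ℝ) 1)
    (hno : ∀ x₁ ∈ Set.Ioo (0:ℝ) 1, ∀ x₂ ∈ Set.Ioo (0:ℝ) 1, U x₁ x₂ ≠ 0 ∧ U x₁ x₂ ≠ 1) :
    Uninorm (fun x y => if max x y = 1 then 1 else if min x y = 0 then 0 else U x y) e := by
  obtain ⟨heI, hmaps, hcomm, hassoc, hmono, hneut⟩ := hU
  set V : ℝ → ℝ → ℝ :=
    (fun x y => if max x y = 1 then 1 else if min x y = 0 then 0 else U x y) with hVdef
  have hIoo : Set.Ioo (0:ℝ) 1 ⊆ UnitI := Set.Ioo_subset_Icc_self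
  have hV1 : ∀ z : ℝ, z ≤ 1 → V 1 z = 1 ∧ V z 1 = 1 := by
    intro z hz
    constructor
    · simp [hVdef, max_eq_left hz]
    · simp [hVdef, max_eq_right hz]
  have hV0 : ∀ z : ℝ, 0 ≤ z → z < 1 → V 0 z = 0 ∧ V z 0 = 0 := by
    intro z hz0 hz1
    constructor
    · simp [hVdef, max_eq_right hz0, min_eq_left hz0, hz1.ne]
    · simp [hVdef, max_eq_left hz0, min_eq_right hz0, hz1.ne]
  have hVmid : ∀ x ∈ Set.Ioo (0:ℝ) 1, ∀ y ∈ Set.Ioo (0:ℝ) 1,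
      V x y = U x y ∧ U x y ∈ Set.Ioo (0:ℝ) 1 := by
    intro x hx y hy
    have hmax : max x y ≠ 1 := ne_of_lt (max_lt hx.2 hy.2)
    have hmin : min x y ≠ 0 := ne_of_gt (lt_min hx.1 hy.1)
    have hU1 : U x y ∈ UnitI := hmaps x (hIoo hx) y (hIoo hy)
    have hne := hno x hx y hy
    refine ⟨by simp [hVdef, hmax, hmin], ⟨lt_of_le_of_ne hU1.1 (Ne.symm hne.1),
      lt_of_le_of_ne hU1.2 hne.2⟩⟩
  have hVI : MapsI V := by
    intro x hx y hy
    simp only [hVdef]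
    split_ifs with h1 h2
    · exact ⟨by norm_num, le_refl 1⟩
    · exact ⟨le_refl 0, by norm_num⟩
    · exact hmaps x hx y hy
  have hVcomm : Comm2 V := by
    intro x hx y hy
    simp [hVdef, max_comm, min_comm, hcomm x hx y hy]
  have hVlt1 : ∀ y z : ℝ, y ∈ UnitI → z ∈ UnitI → y < 1 → z < 1 → V y z < 1 := by
    intro y z hy hz hy1 hz1
    rcases eq_or_lt_of_le hy.1 with h | h
    · subst h; rw [(hV0 z hz.1 hz1).1]; norm_num
    · rcases eq_or_lt_of_le hz.1 with h' | h'
      · subst h'; rw [(hV0 y hy.1 hy1).2]; norm_num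
      · have := hVmid y ⟨h, hy1⟩ z ⟨h', hz1⟩
        rw [this.1]; exact this.2.2
  constructor
  · exact heI
  constructor
  · exact hVI
  constructor
  · exact hVcomm
  constructor
  · -- associativity
    intro x hx y hy z hz
    by_cases hx1 : x = 1
    · subst hx1
      rw [(hV1 y hy.2).1, (hV1 z hz.2).1, (hV1 (V y z) (hVI y hy z hz).2).1]
    by_cases hy1 : y = 1
    · subst hy1
      rw [(hV1 x hx.2).2, (hV1 z hz.2).1, (hV1 x hx.2).2]
    by_cases hz1 : z = 1
    · subst hz1
      rw [(hV1 (V x y) (hVI x hx y hy).2).2, (hV1 y hy.2).2, (hV1 x hx.2).2]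
    have hxlt : x < 1 := lt_of_le_of_ne hx.2 hx1
    have hylt : y < 1 := lt_of_le_of_ne hy.2 hy1
    have hzlt : z < 1 := lt_of_le_of_ne hz.2 hz1
    by_cases hx0 : x = 0
    · subst hx0
      rw [(hV0 y hy.1 hylt).1, (hV0 z hz.1 hzlt).1,
        (hV0 (V y z) (hVI y hy z hz).1 (hVlt1 y z hy hz hylt hzlt)).1]
    by_cases hy0 : y = 0
    · subst hy0
      rw [(hV0 x hx.1 hxlt).2, (hV0 z hz.1 hzlt).1, (hV0 x hx.1 hxlt).2]
    by_cases hz0 : z = 0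
    · subst hz0
      rw [(hV0 (V x y) (hVI x hx y hy).1 (hVlt1 x y hx hy hxlt hylt)).2,
        (hV0 y hy.1 hylt).2, (hV0 x hx.1 hxlt).2]
    have hxm : x ∈ Set.Ioo (0:ℝ) 1 := ⟨lt_of_le_of_ne hx.1 (Ne.symm hx0), hxlt⟩
    have hym : y ∈ Set.Ioo (0:ℝ) 1 := ⟨lt_of_le_of_ne hy.1 (Ne.symm hy0), hylt⟩
    have hzm : z ∈ Set.Ioo (0:ℝ) 1 := ⟨lt_of_le_of_ne hz.1 (Ne.symm hz0), hzlt⟩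
    obtain ⟨hxy_eq, hxy_mem⟩ := hVmid x hxm y hym
    obtain ⟨hyz_eq, hyz_mem⟩ := hVmid y hym z hzm
    rw [hxy_eq, hyz_eq, (hVmid (U x y) hxy_mem z hzm).1, (hVmid x hxm (U y z) hyz_mem).1]
    exact hassoc x hx y hy z hz
  constructor
  · -- monotonicity
    have key : ∀ x₁ ∈ UnitI, ∀ x₂ ∈ UnitI, ∀ y ∈ UnitI, x₁ ≤ x₂ → V x₁ y ≤ V x₂ y := by
      intro x₁ hx₁ x₂ hx₂ y hy h
      have hmax : max x₁ y ≤ max x₂ y := max_le_max h le_rfl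
      have hmin : min x₁ y ≤ min x₂ y := min_le_min h le_rfl
      by_cases h2 : max x₂ y = 1
      · have h2' : V x₂ y = 1 := by simp [hVdef, h2]
        rw [h2']; exact (hVI x₁ hx₁ y hy).2
      · have h1 : max x₁ y ≠ 1 := by
          intro hh; exact h2 (le_antisymm (max_le hx₂.2 hy.2) (hh ▸ hmax))
        by_cases m1 : min x₁ y = 0
        · have m1' : V x₁ y = 0 := by simp [hVdef, h1, m1]
          rw [m1']; exact (hVI x₂ hx₂ y hy).1
        · have m2 : min x₂ y ≠ 0 := by
            intro hh; exact m1 (le_antisymm (hh ▸ hmin) (le_min hx₁.1 hy.1))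
          have e1 : V x₁ y = U x₁ y := by simp [hVdef, h1, m1]
          have e2 : V x₂ y = U x₂ y := by simp [hVdef, h2, m2]
          rw [e1, e2]; exact (hmono x₁ hx₁ x₂ hx₂ y hy h).1
    intro x₁ hx₁ x₂ hx₂ y hy h
    refine ⟨key x₁ hx₁ x₂ hx₂ y hy h, ?_⟩
    rw [hVcomm y hy x₁ hx₁, hVcomm y hy x₂ hx₂]
    exact key x₁ hx₁ x₂ hx₂ y hy h
  · -- neutral element
    intro x hx
    by_cases hx1 : x = 1
    · subst hx1; exact ⟨(hV1 e he.2.le).2, (hV1 e he.2.le).1⟩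
    by_cases hx0 : x = 0
    · subst hx0; exact ⟨(hV0 e he.1.le he.2).2, (hV0 e he.1.le he.2).1⟩
    have hxm : x ∈ Set.Ioo (0:ℝ) 1 :=
      ⟨lt_of_le_of_ne hx.1 (Ne.symm hx0), lt_of_le_of_ne hx.2 hx1⟩
    refine ⟨?_, ?_⟩
    · rw [(hVmid e he x hxm).1]; exact (hneut x hx).1
    · rw [(hVmid x hxm e he).1]; exact (hneut x hx).2
end

section
/- Let U : [0,1]² → [0,1] be a uninorm with neutral element e whose underlying t-norm and t-conorm are continuous. Let a < e be an idempotent element of U and suppose the function u_a(z) = U(a,z) is discontinuous at a point b ∈ [0,1]. Then b is an idempotent element of U. -/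
open Set Filter Topology

/-- If a < e is idempotent and z ↦ U(a,z) is discontinuous at b, then b is
idempotent. -/
theorem discontinuity_point_idempotent (U : ℝ → ℝ → ℝ) (e : ℝ) (hU : Uninorm U e)
    (hTcont : ContinuousOn (fun p : ℝ × ℝ => U p.1 p.2) (Set.Icc (0:ℝ) e ×ˢ Set.Icc (0:ℝ) e))
    (hCcont : ContinuousOn (fun p : ℝ × ℝ => U p.1 p.2) (Set.Icc e (1:ℝ) ×ˢ Set.Icc e (1:ℝ)))
    (a : ℝ) (ha : a ∈ UnitI) (hae : a < e) (hida : U a a = a)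
    (b : ℝ) (hb : b ∈ UnitI)
    (hdisc : ¬ ContinuousWithinAt (fun z => U a z) UnitI b) :
    U b b = b := by
  obtain ⟨he, hmaps, hcomm, hassoc, hmono, hneut⟩ := hU
  have haI : a ∈ UnitI := ha
  have heI : e ∈ UnitI := he
  have hbI : b ∈ UnitI := hb
  have ha0 : (0:ℝ) ≤ a := ha.1
  have ha1 : a ≤ 1 := ha.2
  have he0 : (0:ℝ) ≤ e := he.1
  have he1 : e ≤ 1 := he.2
  have hb0 : (0:ℝ) ≤ b := hb.1
  have hb1 : b ≤ 1 := hb.2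
  have hUae : U a e = a := (hneut a haI).2
  rcases lt_trichotomy b e with hbe | hbe | hbe
  · -- case b < e : contradiction with hdisc
    exfalso
    apply hdisc
    have h1 : ContinuousOn (fun z => U a z) (Icc 0 e) := by
      have hmapsTo : MapsTo (fun z => ((a, z) : ℝ × ℝ)) (Icc 0 e) (Icc (0:ℝ) e ×ˢ Icc (0:ℝ) e) :=
        fun z hz => ⟨⟨ha0, hae.le⟩, hz⟩
      exact hTcont.comp ((continuous_const.prodMk continuous_id).continuousOn) hmapsTo
    have h2 : ContinuousWithinAt (fun z => U a z) (Icc 0 e) b :=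
      h1.continuousWithinAt ⟨hb0, hbe.le⟩
    apply h2.mono_of_mem_nhdsWithin
    have hIio : Iio e ∈ 𝓝[UnitI] b := nhdsWithin_le_nhds (Iio_mem_nhds hbe)
    filter_upwards [hIio, self_mem_nhdsWithin] with z hz hzU
    exact ⟨hzU.1, hz.le⟩
  · -- case b = e : trivial
    subst hbe
    exact (hneut b hbI).1
  · -- case e < b : main case
    -- β = sup of the set where u_a ≤ e
    set S : Set ℝ := {z | z ∈ UnitI ∧ U a z ≤ e} with hSdef
    have heS : e ∈ S := ⟨heI, by rw [hUae]; exact hae.le⟩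
    have hSne : S.Nonempty := ⟨e, heS⟩
    have hSbdd : BddAbove S := ⟨1, fun z hz => hz.1.2⟩
    set β := sSup S with hβdef
    have hβe : e ≤ β := le_csSup hSbdd heS
    have hβ1 : β ≤ 1 := csSup_le hSne fun z hz => hz.1.2
    have P1 : ∀ z, z ∈ UnitI → z < β → U a z ≤ e := by
      intro z hz hzβ
      obtain ⟨w, hwS, hzw⟩ := exists_lt_of_lt_csSup hSne hzβ
      calc U a z ≤ U a w := (hmono z hz w hwS.1 a haI hzw.le).2
        _ ≤ e := hwS.2
    have P2 : ∀ z, z ∈ UnitI → β < z → e < U a z := by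
      intro z hz hβz
      by_contra h
      push_neg at h
      exact absurd (le_csSup hSbdd ⟨hz, h⟩) (not_le.2 hβz)
    have P3 : ∀ z, a ≤ z → z ≤ e → U a z = a := by
      intro z h1 h2
      have hzI : z ∈ UnitI := ⟨ha0.trans h1, h2.trans he1⟩
      have hle : U a z ≤ U a e := (hmono z hzI e heI a haI h2).2
      have hge : U a a ≤ U a z := (hmono a haI z hzI a haI h1).2
      rw [hUae] at hle
      rw [hida] at hge
      exact le_antisymm hle hge
    have P4 : ∀ z, z ∈ UnitI → U a (U a z) = U a z := by
      intro z hz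
      rw [← hassoc a haI a haI z hz, hida]
    have P5 : ∀ z, e ≤ z → z < β → U a z = a := by
      intro z h1 h2
      have hzI : z ∈ UnitI := ⟨he0.trans h1, le_trans h2.le hβ1⟩
      have hs1 : a ≤ U a z := by
        have := (hmono e heI z hzI a haI h1).2
        rwa [hUae] at this
      have hs2 : U a z ≤ e := P1 z hzI h2
      have hfix : U a (U a z) = U a z := P4 z hzI
      have := P3 (U a z) hs1 hs2
      rw [hfix] at this
      exact this
    have P6 : ∀ y, y ∈ UnitI → β < y → U a y = y := by
      intro y hy hβy
      have hsI : U a y ∈ UnitI := hmaps a haI y hy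
      set s := U a y with hs
      have hes : e < s := P2 y hy hβy
      have hsy : s ≤ y := by
        have := (hmono a haI e heI y hy hae.le).1
        rwa [(hneut y hy).1] at this
      by_contra hne
      have hsy' : s < y := lt_of_le_of_ne hsy hne
      set t := (s + y)/2 with ht
      have hts : s < t := by rw [ht]; linarith
      have hty : t < y := by rw [ht]; linarith
      have htI : t ∈ UnitI := ⟨le_of_lt (lt_of_le_of_lt (he0.trans hes.le) hts), hty.le.trans hy.2⟩
      -- IVT for w ↦ U s w on [e, y]
      have hgy : y ≤ U s y := by
        have := (hmono e heI s hsI y hy hes.le).1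
        rwa [(hneut y hy).1] at this
      have hgcont : ContinuousOn (fun w => U s w) (Icc e y) := by
        have hmapsTo : MapsTo (fun w => ((s, w) : ℝ × ℝ)) (Icc e y) (Icc e (1:ℝ) ×ˢ Icc e (1:ℝ)) :=
          fun w hw => ⟨⟨hes.le, hsI.2⟩, ⟨hw.1, hw.2.trans hy.2⟩⟩
        exact hCcont.comp ((continuous_const.prodMk continuous_id).continuousOn) hmapsTo
      have hIVT := intermediate_value_Icc (le_trans hes.le hsy) hgcont
      have htmem : t ∈ Icc (U s e) (U s y) := by
        rw [(hneut s hsI).2]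
        exact ⟨hts.le, hty.le.trans hgy⟩
      obtain ⟨w, hw, hgw⟩ := hIVT htmem
      have hwI : w ∈ UnitI := ⟨he0.trans hw.1, hw.2.trans hy.2⟩
      have hUas : U a s = s := P4 y hy
      have ht_fix : U a t = t := by
        rw [← hgw, ← hassoc a haI s hsI w hwI, hUas]
      have hle2 : U a t ≤ U a y := (hmono t htI y hy a haI hty.le).2
      rw [ht_fix, ← hs] at hle2
      linarith
    -- b = β
    have hbβ : b = β := by
      by_contra hbβ'
      rcases lt_or_gt_of_ne hbβ' with hlt | hgt
      · -- b < β : u_a locally constant a near b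
        apply hdisc
        set r := (b + β)/2 with hr
        have hbr : b < r := by rw [hr]; linarith
        have hrβ : r < β := by rw [hr]; linarith
        have hev : ∀ᶠ z in 𝓝[UnitI] b, U a z = a := by
          have hIoo : Ioo e r ∈ 𝓝[UnitI] b := nhdsWithin_le_nhds (Ioo_mem_nhds hbe hbr)
          filter_upwards [hIoo] with z hz
          exact P5 z hz.1.le (hz.2.trans hrβ)
        have hfb : U a b = a := P5 b hbe.le hlt
        exact continuousWithinAt_const.congr_of_eventuallyEq hev hfb
      · -- β < b : u_a locally identity near b
        apply hdisc
        set r := (β + b)/2 with hr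
        have hrb : r < b := by rw [hr]; linarith
        have hβr : β < r := by rw [hr]; linarith
        have hev : ∀ᶠ z in 𝓝[UnitI] b, U a z = z := by
          have hIoi : Ioi r ∈ 𝓝[UnitI] b := nhdsWithin_le_nhds (Ioi_mem_nhds hrb)
          filter_upwards [hIoi, self_mem_nhdsWithin] with z hz hzU
          exact P6 z hzU (hβr.trans hz)
        have hfb : U a b = b := P6 b hbI hgt
        exact continuousWithinAt_id.congr_of_eventuallyEq hev hfb
    -- now show U b b = b
    have hbbge : b ≤ U b b := by
      have := (hmono e heI b hbI b hbI hbe.le).1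
      rwa [(hneut b hbI).1] at this
    have hbble : U b b ≤ b := by
      by_contra hc
      push_neg at hc
      -- continuity of diagonal at b within [e,1]
      have hdiag : ContinuousWithinAt (fun z => U z z) (Icc e 1) b := by
        have hmapsTo : MapsTo (fun z => ((z, z) : ℝ × ℝ)) (Icc e (1:ℝ))
            (Icc e (1:ℝ) ×ˢ Icc e (1:ℝ)) := fun z hz => ⟨hz, hz⟩
        exact (hCcont.comp ((continuous_id.prodMk continuous_id).continuousOn)
          hmapsTo).continuousWithinAt ⟨hbe.le, hb1⟩
      have hevt : ∀ᶠ z in 𝓝[Icc e 1] b, b < U z z := hdiag.eventually (lt_mem_nhds hc)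
      haveI hneBot : (𝓝[Ico e b] b).NeBot := by
        rw [← mem_closure_iff_nhdsWithin_neBot, closure_Ico hbe.ne]
        exact ⟨hbe.le, le_rfl⟩
      have hmonoF : 𝓝[Ico e b] b ≤ 𝓝[Icc e 1] b :=
        nhdsWithin_mono b fun z hz => ⟨hz.1, hz.2.le.trans hb1⟩
      have hevt2 : ∀ᶠ z in 𝓝[Ico e b] b, b < U z z := hmonoF hevt
      obtain ⟨z, hz1, hz2⟩ := (hevt2.and eventually_mem_nhdsWithin).exists
      have hzI : z ∈ UnitI := ⟨he0.trans hz2.1, hz2.2.le.trans hb1⟩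
      have hUaz : U a z = a := by
        apply P5 z hz2.1
        rw [← hbβ]
        exact hz2.2
      have hkey : U a (U z z) = a := by
        rw [← hassoc a haI z hzI z hzI, hUaz, hUaz]
      have hzzI : U z z ∈ UnitI := hmaps z hzI z hzI
      have := P2 (U z z) hzzI (by rw [← hbβ]; exact hz1)
      rw [hkey] at this
      linarith
    exact le_antisymm hbble hbbge
end

section
/- Let T : [0,1]² → [0,1] and C : [0,1]² → [0,1] be a t-norm and a t-conorm, and let e ∈ [0,1]. Then the function U_min defined by U_min(x,y) = e·T(x/e, y/e) for (x,y) ∈ [0,e]², U_min(x,y) = e + (1-e)·C((x-e)/(1-e), (y-e)/(1-e)) for (x,y) ∈ [e,1]², and U_min(x,y) = min(x,y) otherwise, is a uninorm with neutral element e. (For e = 0 or e = 1 interpret the degenerate scaled parts as empty.) -/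
open Set

/-- The minimal uninorm built from a t-norm T on [0,e]² and a t-conorm C on
[e,1]², with min elsewhere, is a uninorm with neutral element e. -/
theorem Umin_uninorm (T C : ℝ → ℝ → ℝ) (e : ℝ) (he : e ∈ UnitI)
    (hTmaps : MapsI T) (hTcomm : Comm2 T) (hTassoc : Assoc2 T) (hTmono : Mono2 T)
    (hTneut : ∀ x ∈ UnitI, T 1 x = x ∧ T x 1 = x)
    (hCmaps : MapsI C) (hCcomm : Comm2 C) (hCassoc : Assoc2 C) (hCmono : Mono2 C)
    (hCneut : ∀ x ∈ UnitI, C 0 x = x ∧ C x 0 = x) :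
    Uninorm (fun x y =>
      if x ≤ e ∧ y ≤ e then e * T (x / e) (y / e)
      else if e ≤ x ∧ e ≤ y then e + (1 - e) * C ((x - e) / (1 - e)) ((y - e) / (1 - e))
      else min x y) e := by
  obtain ⟨he0, he1⟩ := he
  set U : ℝ → ℝ → ℝ := fun x y =>
      if x ≤ e ∧ y ≤ e then e * T (x / e) (y / e)
      else if e ≤ x ∧ e ≤ y then e + (1 - e) * C ((x - e) / (1 - e)) ((y - e) / (1 - e))
      else min x y with hU
  have h01 : (0:ℝ) ∈ UnitI := by constructor <;> norm_num
  have h11 : (1:ℝ) ∈ UnitI := by constructor <;> norm_num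
  have hmemT : ∀ x : ℝ, 0 ≤ x → x ≤ e → 0 < e → x / e ∈ UnitI := fun x h1 h2 h3 =>
    ⟨div_nonneg h1 h3.le, (div_le_one h3).mpr h2⟩
  have hmemC : ∀ x : ℝ, e ≤ x → x ≤ 1 → e < 1 → (x - e) / (1 - e) ∈ UnitI := fun x h1 h2 h3 =>
    ⟨div_nonneg (by linarith) (by linarith), (div_le_one (by linarith)).mpr (by linarith)⟩
  have hvalA : ∀ x y : ℝ, x ≤ e → y ≤ e → U x y = e * T (x / e) (y / e) := by
    intro x y h1 h2; simp [hU, h1, h2]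
  have hvalB : ∀ x y : ℝ, e ≤ x → e ≤ y →
      U x y = e + (1 - e) * C ((x - e) / (1 - e)) ((y - e) / (1 - e)) := by
    intro x y h1 h2
    by_cases h : x ≤ e ∧ y ≤ e
    · have hx : x = e := le_antisymm h.1 h1
      have hy : y = e := le_antisymm h.2 h2
      rw [hx, hy]
      have hC0 : C ((e - e) / (1 - e)) ((e - e) / (1 - e)) = 0 := by
        simp [(hCneut 0 h01).1]
      rw [hvalA e e le_rfl le_rfl, hC0]
      rcases eq_or_lt_of_le he0 with h0 | h0
      · rw [← h0]; norm_num
      · rw [div_self h0.ne', (hTneut 1 h11).1]; ring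
    · simp only [hU]
      rw [if_neg h, if_pos ⟨h1, h2⟩]
  have hvalM1 : ∀ x y : ℝ, x < e → e < y → U x y = x := by
    intro x y h1 h2
    simp only [hU]
    rw [if_neg (by push_neg; intro _; linarith), if_neg (by push_neg; intro h; linarith),
      min_eq_left (by linarith)]
  have hvalM2 : ∀ x y : ℝ, e < x → y < e → U x y = y := by
    intro x y h1 h2
    simp only [hU]
    rw [if_neg (by push_neg; intro h; linarith), if_neg (by push_neg; intro h; linarith),
      min_eq_right (by linarith)]
  have hAle : ∀ x ∈ UnitI, ∀ y ∈ UnitI, x ≤ e → y ≤ e →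
      0 ≤ U x y ∧ U x y ≤ x ∧ U x y ≤ y := by
    intro x hx y hy h1 h2
    rw [hvalA x y h1 h2]
    rcases eq_or_lt_of_le he0 with h0 | h0
    · have hx0 : x = 0 := le_antisymm (by linarith) hx.1
      have hy0 : y = 0 := le_antisymm (by linarith) hy.1
      rw [← h0]; simp [hx0, hy0]
    · have hxI : x / e ∈ UnitI := hmemT x hx.1 h1 h0
      have hyI : y / e ∈ UnitI := hmemT y hy.1 h2 h0
      have hT1 : T (x / e) (y / e) ≤ T (x / e) 1 := (hTmono _ hyI 1 h11 _ hxI hyI.2).2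
      have hT2 : T (x / e) (y / e) ≤ T 1 (y / e) := (hTmono _ hxI 1 h11 _ hyI hxI.2).1
      rw [(hTneut _ hxI).2] at hT1
      rw [(hTneut _ hyI).1] at hT2
      have hTpos : 0 ≤ T (x / e) (y / e) := (hTmaps _ hxI _ hyI).1
      refine ⟨by positivity, ?_, ?_⟩
      · calc e * T (x / e) (y / e) ≤ e * (x / e) := by nlinarith
          _ = x := by field_simp
      · calc e * T (x / e) (y / e) ≤ e * (y / e) := by nlinarith
          _ = y := by field_simp
  have hBge : ∀ x ∈ UnitI, ∀ y ∈ UnitI, e ≤ x → e ≤ y →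
      x ≤ U x y ∧ y ≤ U x y ∧ U x y ≤ 1 := by
    intro x hx y hy h1 h2
    rw [hvalB x y h1 h2]
    rcases eq_or_lt_of_le he1 with h0 | h0
    · have hx1 : x = 1 := le_antisymm hx.2 (by linarith)
      have hy1 : y = 1 := le_antisymm hy.2 (by linarith)
      rw [h0]; simp [hx1, hy1]
    · have hxI : (x - e) / (1 - e) ∈ UnitI := hmemC x h1 hx.2 h0
      have hyI : (y - e) / (1 - e) ∈ UnitI := hmemC y h2 hy.2 h0
      have hC1 : C ((x - e) / (1 - e)) 0 ≤ C ((x - e) / (1 - e)) ((y - e) / (1 - e)) :=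
        (hCmono 0 h01 _ hyI _ hxI hyI.1).2
      have hC2 : C 0 ((y - e) / (1 - e)) ≤ C ((x - e) / (1 - e)) ((y - e) / (1 - e)) :=
        (hCmono 0 h01 _ hxI _ hyI hxI.1).1
      rw [(hCneut _ hxI).2] at hC1
      rw [(hCneut _ hyI).1] at hC2
      have hCle : C ((x - e) / (1 - e)) ((y - e) / (1 - e)) ≤ 1 :=
        (hCmaps _ hxI _ hyI).2
      have h1e : (0:ℝ) < 1 - e := by linarith
      refine ⟨?_, ?_, by nlinarith⟩
      · have : (1 - e) * ((x - e) / (1 - e)) ≤ (1 - e) * C ((x - e) / (1 - e)) ((y - e) / (1 - e)) := by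
          nlinarith
        rw [mul_div_cancel₀ _ h1e.ne'] at this
        linarith
      · have : (1 - e) * ((y - e) / (1 - e)) ≤ (1 - e) * C ((x - e) / (1 - e)) ((y - e) / (1 - e)) := by
          nlinarith
        rw [mul_div_cancel₀ _ h1e.ne'] at this
        linarith
  have hmaps : MapsI U := by
    intro x hx y hy
    by_cases h1 : x ≤ e
    · by_cases h2 : y ≤ e
      · obtain ⟨a, b, _⟩ := hAle x hx y hy h1 h2
        exact ⟨a, le_trans b hx.2⟩
      · push_neg at h2
        rcases lt_or_eq_of_le h1 with h1 | h1
        · rw [hvalM1 x y h1 h2]; exact hx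
        · subst h1
          obtain ⟨a, b, c⟩ := hBge x hx y hy le_rfl h2.le
          exact ⟨le_trans hx.1 a, c⟩
    · push_neg at h1
      by_cases h2 : e ≤ y
      · obtain ⟨a, b, c⟩ := hBge x hx y hy h1.le h2
        exact ⟨le_trans hx.1 a, c⟩
      · push_neg at h2
        rw [hvalM2 x y h1 h2]; exact hy
  have hneutL : ∀ x ∈ UnitI, U e x = x := by
    intro x hx
    by_cases h : x ≤ e
    · rw [hvalA e x le_rfl h]
      rcases eq_or_lt_of_le he0 with h0 | h0
      · have hx0 : x = 0 := le_antisymm (by linarith) hx.1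
        rw [← h0, hx0]; ring
      · rw [div_self h0.ne', (hTneut _ (hmemT x hx.1 h h0)).1, mul_div_cancel₀ _ h0.ne']
    · push_neg at h
      rw [hvalB e x le_rfl h.le]
      have h0 : e < 1 := lt_of_lt_of_le h hx.2
      rw [sub_self, zero_div, (hCneut _ (hmemC x h.le hx.2 h0)).1,
        mul_div_cancel₀ _ (by linarith : (1 - e) ≠ 0)]
      ring
  have hneutR : ∀ x ∈ UnitI, U x e = x := by
    intro x hx
    by_cases h : x ≤ e
    · rw [hvalA x e h le_rfl]
      rcases eq_or_lt_of_le he0 with h0 | h0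
      · have hx0 : x = 0 := le_antisymm (by linarith) hx.1
        rw [← h0, hx0]; ring
      · rw [div_self h0.ne', (hTneut _ (hmemT x hx.1 h h0)).2, mul_div_cancel₀ _ h0.ne']
    · push_neg at h
      rw [hvalB x e h.le le_rfl]
      have h0 : e < 1 := lt_of_lt_of_le h hx.2
      rw [sub_self, zero_div, (hCneut _ (hmemC x h.le hx.2 h0)).2,
        mul_div_cancel₀ _ (by linarith : (1 - e) ≠ 0)]
      ring
  have hcomm : Comm2 U := by
    intro x hx y hy
    by_cases h1 : x ≤ e
    · by_cases h2 : y ≤ e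
      · rw [hvalA x y h1 h2, hvalA y x h2 h1]
        rcases eq_or_lt_of_le he0 with h0 | h0
        · rw [← h0]; ring
        · rw [hTcomm _ (hmemT x hx.1 h1 h0) _ (hmemT y hy.1 h2 h0)]
      · push_neg at h2
        rcases lt_or_eq_of_le h1 with h1' | h1'
        · rw [hvalM1 x y h1' h2, hvalM2 y x h2 h1']
        · rw [h1', hneutL y hy, hneutR y hy]
    · push_neg at h1
      by_cases h2 : e ≤ y
      · rw [hvalB x y h1.le h2, hvalB y x h2 h1.le]
        have h0 : e < 1 := lt_of_lt_of_le h1 hx.2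
        rw [hCcomm _ (hmemC x h1.le hx.2 h0) _ (hmemC y h2 hy.2 h0)]
      · push_neg at h2
        rw [hvalM2 x y h1 h2, hvalM1 y x h2 h1]
  have hmono1 : ∀ x₁ ∈ UnitI, ∀ x₂ ∈ UnitI, ∀ y ∈ UnitI, x₁ ≤ x₂ → U x₁ y ≤ U x₂ y := by
    intro x₁ hx₁ x₂ hx₂ y hy hle
    by_cases hy' : y ≤ e
    · by_cases h2 : x₂ ≤ e
      · have h1 : x₁ ≤ e := le_trans hle h2
        rw [hvalA x₁ y h1 hy', hvalA x₂ y h2 hy']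
        rcases eq_or_lt_of_le he0 with h0 | h0
        · have : x₁ = x₂ := le_antisymm hle (by linarith [hx₂.1, hx₁.1])
          rw [this]
        · have := (hTmono _ (hmemT x₁ hx₁.1 h1 h0) _ (hmemT x₂ hx₂.1 h2 h0)
            _ (hmemT y hy.1 hy' h0)
            ((div_le_div_iff₀ h0 h0).mpr (by nlinarith))).1
          nlinarith
      · push_neg at h2
        rcases lt_or_eq_of_le hy' with hy'' | hy''
        · have hr : U x₂ y = y := hvalM2 x₂ y h2 hy''
          rw [hr]
          by_cases h1 : x₁ ≤ e
          · exact (hAle x₁ hx₁ y hy h1 hy').2.2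
          · push_neg at h1
            rw [hvalM2 x₁ y h1 hy'']
        · rw [hy'', hneutR x₂ hx₂]
          by_cases h1 : x₁ ≤ e
          · exact le_trans (hAle x₁ hx₁ e ⟨he0, he1⟩ h1 le_rfl).2.1 hle
          · rw [hneutR x₁ hx₁]; exact hle
    · push_neg at hy'
      have h0 : e < 1 := lt_of_lt_of_le hy' hy.2
      by_cases h2 : x₂ ≤ e
      · have h1 : x₁ ≤ e := le_trans hle h2
        rcases lt_or_eq_of_le h1 with h1' | h1'
        · rw [hvalM1 x₁ y h1' hy']
          rcases lt_or_eq_of_le h2 with h2' | h2'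
          · rw [hvalM1 x₂ y h2' hy']; exact hle
          · rw [h2', hneutL y hy]; linarith
        · have h2' : x₂ = e := le_antisymm h2 (h1' ▸ hle)
          rw [h1', h2']
      · push_neg at h2
        have hr := (hBge x₂ hx₂ y hy h2.le hy'.le).2.1
        by_cases h1 : x₁ ≤ e
        · rcases lt_or_eq_of_le h1 with h1' | h1'
          · rw [hvalM1 x₁ y h1' hy']; linarith
          · rw [h1', hneutL y hy]; linarith
        · push_neg at h1
          rw [hvalB x₁ y h1.le hy'.le, hvalB x₂ y h2.le hy'.le]
          have := (hCmono _ (hmemC x₁ h1.le hx₁.2 h0) _ (hmemC x₂ h2.le hx₂.2 h0)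
            _ (hmemC y hy'.le hy.2 h0)
            ((div_le_div_iff₀ (by linarith) (by linarith)).mpr (by nlinarith))).1
          nlinarith
  have hmono : Mono2 U := by
    intro x₁ hx₁ x₂ hx₂ y hy hle
    refine ⟨hmono1 x₁ hx₁ x₂ hx₂ y hy hle, ?_⟩
    rw [hcomm y hy x₁ hx₁, hcomm y hy x₂ hx₂]
    exact hmono1 x₁ hx₁ x₂ hx₂ y hy hle
  have hassoc : Assoc2 U := by
    intro x hx y hy z hz
    by_cases hye : y = e
    · subst hye
      rw [hneutR x hx, hneutL z hz]
    by_cases hxe : x = e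
    · subst hxe
      rw [hneutL y hy, hneutL (U y z) (hmaps y hy z hz)]
    by_cases hze : z = e
    · subst hze
      rw [hneutR y hy, hneutR (U x y) (hmaps x hx y hy)]
    rcases lt_or_gt_of_ne hxe with hx' | hx' <;>
      rcases lt_or_gt_of_ne hye with hy' | hy' <;>
      rcases lt_or_gt_of_ne hze with hz' | hz'
    · -- LLL
      have h0 : 0 < e := lt_of_le_of_lt hx.1 hx'
      have hxI := hmemT x hx.1 hx'.le h0
      have hyI := hmemT y hy.1 hy'.le h0
      have hzI := hmemT z hz.1 hz'.le h0
      have hxy : U x y ≤ e := le_trans (hAle x hx y hy hx'.le hy'.le).2.1 hx'.le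
      have hyz : U y z ≤ e := le_trans (hAle y hy z hz hy'.le hz'.le).2.1 hy'.le
      rw [hvalA (U x y) z hxy hz'.le, hvalA x (U y z) hx'.le hyz,
        hvalA x y hx'.le hy'.le, hvalA y z hy'.le hz'.le,
        mul_div_cancel_left₀ _ h0.ne', mul_div_cancel_left₀ _ h0.ne',
        hTassoc _ hxI _ hyI _ hzI]
    · -- LLH
      have t1 : U x y ≤ x := (hAle x hx y hy hx'.le hy'.le).2.1
      rw [hvalM1 (U x y) z (lt_of_le_of_lt t1 hx') hz', hvalM1 y z hy' hz']
    · -- LHL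
      rw [hvalM1 x y hx' hy', hvalM2 y z hy' hz']
    · -- LHH
      rw [hvalM1 x y hx' hy', hvalM1 x z hx' hz']
      have hc : e < U y z := lt_of_lt_of_le hy' (hBge y hy z hz hy'.le hz'.le).1
      rw [hvalM1 x (U y z) hx' hc]
    · -- HLL
      rw [hvalM2 x y hx' hy']
      have t1 : U y z ≤ y := (hAle y hy z hz hy'.le hz'.le).2.1
      rw [hvalM2 x (U y z) hx' (lt_of_le_of_lt t1 hy')]
    · -- HLH
      rw [hvalM2 x y hx' hy', hvalM1 y z hy' hz', hvalM2 x y hx' hy']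
    · -- HHL
      have hc : e < U x y := lt_of_lt_of_le hx' (hBge x hx y hy hx'.le hy'.le).1
      rw [hvalM2 (U x y) z hc hz', hvalM2 y z hy' hz', hvalM2 x z hx' hz']
    · -- HHH
      have h0 : e < 1 := lt_of_lt_of_le hx' hx.2
      have h1e : (1 - e) ≠ 0 := by linarith
      have hxI := hmemC x hx'.le hx.2 h0
      have hyI := hmemC y hy'.le hy.2 h0
      have hzI := hmemC z hz'.le hz.2 h0
      have hxy1 : e ≤ U x y := le_trans hx'.le (hBge x hx y hy hx'.le hy'.le).1
      have hyz1 : e ≤ U y z := le_trans hy'.le (hBge y hy z hz hy'.le hz'.le).1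
      rw [hvalB (U x y) z hxy1 hz'.le, hvalB x (U y z) hx'.le hyz1,
        hvalB x y hx'.le hy'.le, hvalB y z hy'.le hz'.le]
      have key : ∀ A : ℝ, (e + (1 - e) * A - e) / (1 - e) = A := by
        intro A; field_simp; ring
      rw [key, key, hCassoc _ hxI _ hyI _ hzI]
  exact ⟨⟨he0, he1⟩, hmaps, hcomm, hassoc, hmono, fun x hx => ⟨hneutL x hx, hneutR x hx⟩⟩
end

section
/- Let U : [0,1]² → [0,1] be a uninorm with neutral element e ∈ (0,1) whose underlying t-norm T_U and t-conorm C_U are continuous, and assume U ∈ 𝒩, i.e., U(x,0) = 0 for all x ∈ [0,1) and U(x,1) = 1 for all x ∈ (0,1]. Suppose also U(x,y) = min(x,y) for all (x,y) ∈ [0,e)×[e,1) (i.e., U agrees on (0,1)² with a member of 𝒰_min), and U has no idempotent points in (e,1). Then U cannot be written as a nontrivial ordinal sum: there do not exist a, b with 0 < a ≤ e ≤ b < 1, (a,b) ≠ (0,1) and (a,b) ≠ (e,e), such that both ([0,a) ∪ (b,1])² and [a,b]² are closed under U with U acting as min or max between the blocks in the ordinal-sum fashion. -/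
open Set

/-- A uninorm in 𝒩 ∩ 𝒰 which agrees with a member of 𝒰_min on (0,1)² and has
no idempotent points in (e,1) is irreducible with respect to the ordinal sum
construction. -/
theorem Nmin_irreducible (U : ℝ → ℝ → ℝ) (e : ℝ) (hU : Uninorm U e)
    (he : e ∈ Set.Ioo (0:ℝ) 1)
    (hTcont : ContinuousOn (fun p : ℝ × ℝ => U p.1 p.2) (Set.Icc (0:ℝ) e ×ˢ Set.Icc (0:ℝ) e))
    (hCcont : ContinuousOn (fun p : ℝ × ℝ => U p.1 p.2) (Set.Icc e (1:ℝ) ×ˢ Set.Icc e (1:ℝ)))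
    (hN0 : ∀ x ∈ Set.Ico (0:ℝ) 1, U x 0 = 0)
    (hN1 : ∀ x ∈ Set.Ioc (0:ℝ) 1, U x 1 = 1)
    (hmin : ∀ x ∈ Set.Ico (0:ℝ) e, ∀ y ∈ Set.Ico e (1:ℝ), U x y = min x y)
    (hnoid : ∀ x ∈ Set.Ioo e 1, U x x ≠ x) :
    ¬ ∃ a b : ℝ, 0 < a ∧ a ≤ e ∧ e ≤ b ∧ b < 1 ∧ (a, b) ≠ ((0:ℝ), (1:ℝ)) ∧ (a, b) ≠ (e, e) ∧
      (∀ x ∈ Set.Ico (0:ℝ) a ∪ Set.Ioc b 1, ∀ y ∈ Set.Ico (0:ℝ) a ∪ Set.Ioc b 1,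
        U x y ∈ Set.Ico (0:ℝ) a ∪ Set.Ioc b 1) ∧
      (∀ x ∈ Set.Icc a b, ∀ y ∈ Set.Icc a b, U x y ∈ Set.Icc a b) ∧
      (∀ x ∈ Set.Icc a b, ∀ y ∈ Set.Ioc b 1, U x y = max x y) ∧
      (∀ x ∈ Set.Ico (0:ℝ) a, ∀ y ∈ Set.Icc a b, U x y = min x y) := by
  rintro ⟨a, b, ha, hae, heb, hb1, -, hneee, hA, hB, hmax, -⟩
  obtain ⟨heI, hMaps, hComm, hAssoc, hMono, hNeut⟩ := hU
  have he0 : (0:ℝ) < e := he.1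
  have he1 : e < 1 := he.2
  rcases lt_or_eq_of_le heb with hbe | hbe
  · -- case e < b : b is an idempotent in (e,1)
    have hbI : b ∈ UnitI := ⟨le_trans (le_trans ha.le hae) heb, hb1.le⟩
    have h1 : U b b ∈ Set.Icc a b := hB b ⟨le_trans hae heb, le_refl b⟩ b ⟨le_trans hae heb, le_refl b⟩
    have h2 : U e b ≤ U b b := (hMono e heI b hbI b hbI heb).1
    have h3 : U e b = b := (hNeut b hbI).1
    rw [h3] at h2
    have : U b b = b := le_antisymm h1.2 h2
    exact hnoid b ⟨hbe, hb1⟩ this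
  · -- case b = e : then a < e and hmin contradicts hmax
    have hab : a < e := by
      rcases lt_or_eq_of_le hae with h | h
      · exact h
      · exact absurd (by rw [h, ← hbe]) hneee
    set y : ℝ := (e + 1) / 2 with hy
    have hey : e < y := by simp only [hy]; linarith
    have hy1 : y < 1 := by simp only [hy]; linarith
    have h1 : U a y = max a y := hmax a ⟨le_refl a, le_trans hae heb⟩ y ⟨hbe ▸ hey, hy1.le⟩
    have h2 : U a y = min a y := hmin a ⟨ha.le, hab⟩ y ⟨hey.le, hy1⟩
    have hay : a < y := lt_trans hab hey
    rw [max_eq_right hay.le] at h1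
    rw [min_eq_left hay.le] at h2
    linarith [h1 ▸ h2]
end
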